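/- arXiv:math-ph/0609022 — 7 statements merged into one kernel-verified Lean document; each statement's English description precedes it below -/
import Mathlib

section
/- Let x_1, …, x_m be pairwise distinct complex numbers and let S_q = Σ_{α=1}^m x_α^q denote their power sums (with S_0 = m). Then for every integer p ≥ 1: Σ_{α=1}^m Σ_{β≠α} x_α^p/(x_β − x_α) = (1/2)·( p·S_{p−1} − Σ_{i=0}^{p−1} S_i·S_{p−1−i} ). -/
/-!
Symmetrising the double sum in `α ↔ β` pairs each term `x_α^p / (x_β - x_α)` with
`x_β^p / (x_α - x_β)`; their sum is minus the divided difference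
`(x_α^p - x_β^p) / (x_α - x_β) = Σ_{i<p} x_α^i x_β^(p-1-i)`. Summing this over all pairs,
diagonal included, gives `Σ_{i<p} S_i S_(p-1-i)`, and the diagonal contributes `p · S_(p-1)`.
-/

open Finset

variable {ι : Type*} [Fintype ι]

theorem Finset.sum_sum_erase_swap [DecidableEq ι] {M : Type*} [AddCommMonoid M]
    (f : ι → ι → M) :
    ∑ a, ∑ b ∈ univ.erase a, f b a = ∑ a, ∑ b ∈ univ.erase a, f a b :=
  sum_comm' fun a b => by simp only [mem_univ, mem_erase, and_true, true_and, ne_comm]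

theorem pow_div_sub_add_pow_div_sub {K : Type*} [Field K] {a b : K} (hab : a ≠ b) (p : ℕ) :
    a ^ p / (b - a) + b ^ p / (a - b) = -∑ i ∈ range p, a ^ i * b ^ (p - 1 - i) := by
  rw [(Commute.all a b).geom_sum₂ hab, ← neg_sub a b, div_neg, ← sub_eq_neg_add,
    div_sub_div_same, ← neg_sub, neg_div]

theorem sum_sum_geom_sum₂ {R : Type*} [CommSemiring R] (x : ι → R) (p : ℕ) :
    ∑ a, ∑ b, ∑ i ∈ range p, x a ^ i * x b ^ (p - 1 - i)
      = ∑ i ∈ range p, (∑ a, x a ^ i) * ∑ b, x b ^ (p - 1 - i) := by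
  simp only [sum_mul_sum]
  conv_rhs => rw [sum_comm]
  exact sum_congr rfl fun a _ => sum_comm

theorem two_mul_sum_sum_erase_pow_div_sub [DecidableEq ι] {K : Type*} [Field K] {x : ι → K}
    (hx : Function.Injective x) (p : ℕ) :
    2 * ∑ a, ∑ b ∈ univ.erase a, x a ^ p / (x b - x a)
      = p * ∑ a, x a ^ (p - 1)
          - ∑ i ∈ range p, (∑ a, x a ^ i) * ∑ b, x b ^ (p - 1 - i) := by
  set g : ι → ι → K := fun a b => ∑ i ∈ range p, x a ^ i * x b ^ (p - 1 - i)
  have hpair : ∀ a, ∑ b ∈ univ.erase a, (x a ^ p / (x b - x a) + x b ^ p / (x a - x b))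
      = -(∑ b, g a b - p * x a ^ (p - 1)) := fun a => by
    rw [← geom_sum₂_self, ← sum_erase_eq_sub (mem_univ a), ← sum_neg_distrib]
    exact sum_congr rfl fun b hb =>
      pow_div_sub_add_pow_div_sub (hx.ne (ne_of_mem_erase hb).symm) p
  calc 2 * ∑ a, ∑ b ∈ univ.erase a, x a ^ p / (x b - x a)
      = ∑ a, ∑ b ∈ univ.erase a, (x a ^ p / (x b - x a) + x b ^ p / (x a - x b)) := by
        rw [two_mul]
        nth_rw 2 [← sum_sum_erase_swap]
        simp only [← sum_add_distrib]
    _ = p * ∑ a, x a ^ (p - 1) - ∑ a, ∑ b, g a b := by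
        simp only [hpair, sum_neg_distrib, sum_sub_distrib, ← mul_sum]
        ring
    _ = _ := by rw [sum_sum_geom_sum₂]

theorem stmt_0_general (m : ℕ) (x : Fin m → ℂ) (hx : Function.Injective x)
    (S : ℕ → ℂ) (hS : ∀ q, S q = ∑ α, x α ^ q)
    (p : ℕ) :
    ∑ α, ∑ β ∈ univ.erase α, x α ^ p / (x β - x α)
      = (1 / 2) * ((p : ℂ) * S (p - 1) - ∑ i ∈ range p, S i * S (p - 1 - i)) := by
  obtain rfl : S = fun q => ∑ α, x α ^ q := funext hS
  rw [← two_mul_sum_sum_erase_pow_div_sub hx p]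
  ring

/-- For pairwise distinct complex numbers `x 1, …, x m` with power sums
`S q = Σ_α (x α)^q` (so `S 0 = m`), for every integer `p ≥ 1`:
`Σ_α Σ_{β ≠ α} (x α)^p / (x β - x α) = (1/2)·(p·S (p-1) - Σ_{i=0}^{p-1} S i · S (p-1-i))`. -/
theorem stmt_0 (m : ℕ) (x : Fin m → ℂ) (hx : Function.Injective x)
    (S : ℕ → ℂ) (hS : ∀ q, S q = ∑ α, x α ^ q)
    (p : ℕ) (hp : 1 ≤ p) :
    ∑ α, ∑ β ∈ univ.erase α, x α ^ p / (x β - x α)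
      = (1 / 2) * ((p : ℂ) * S (p - 1) - ∑ i ∈ range p, S i * S (p - 1 - i)) :=
  stmt_0_general m x hx S hS p
end

section
/- If e_1, …, e_M satisfy the Richardson equations at coupling g, then for every integer p ≥ 1 the transformed cluster equation holds: S_p − 4g·d_k·S_{p−1} + 2g·p·S_{p−1} − 2g·Σ_{i=0}^{p−1} S_{p−i−1}·S_i − 4g·Σ_{j≠k} d_j·Σ_{α∈C} x_α^p/(2η_j − e_α) + 4g·Σ_{β∉C} Σ_{α∈C} x_α^p/(e_α − e_β) = 0. -/
/-!
Multiply the `α`-th Richardson equation by `x_α ^ p` and sum over the cluster. In the `d`-sum the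
term `j = k` is `x_α ^ p / x_α = x_α ^ (p - 1)`, giving `d_k S_{p-1}`; the `β`-sum splits into
`β ∉ C` and `β ∈ C`. Since `e_α - e_β = x_β - x_α`, symmetrizing the in-cluster part in `α, β` gives
`x_α ^ p / (x_β - x_α) + x_β ^ p / (x_α - x_β) = -∑_{i<p} x_α ^ i x_β ^ (p-1-i)`, whose double sum
is the convolution `∑ S_{p-1-i} S_i`, corrected on the diagonal by `p S_{p-1}`.
-/

open Finset

section PowerSums

variable {K : Type*} [Field K]

theorem pow_div_sub_add_pow_div_sub_add_geom_sum₂ [DecidableEq K] (a b : K) (p : ℕ) :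
    a ^ p / (b - a) + b ^ p / (a - b) + ∑ i ∈ range p, a ^ i * b ^ (p - 1 - i)
      = if a = b then (p : K) * a ^ (p - 1) else 0 := by
  split_ifs with hab
  -- both quotients are divisions by zero, hence `0`
  · simp [hab, geom_sum₂_self]
  · have hab' : a - b ≠ 0 := sub_ne_zero.mpr hab
    have hgeom : ∑ i ∈ range p, a ^ i * b ^ (p - 1 - i) = (a ^ p - b ^ p) / (a - b) := by
      rw [eq_div_iff hab', geom_sum₂_mul]
    rw [hgeom, ← neg_sub a b, div_neg]
    ring

theorem two_mul_sum_sum_pow_div_sub {ι : Type*} {s : Finset ι} {x : ι → K}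
    (hx : Set.InjOn x s) (p : ℕ) :
    2 * ∑ a ∈ s, ∑ b ∈ s, x a ^ p / (x b - x a)
      = p * ∑ a ∈ s, x a ^ (p - 1)
        - ∑ i ∈ range p, (∑ a ∈ s, x a ^ (p - 1 - i)) * ∑ a ∈ s, x a ^ i := by
  classical
  have hswap : ∑ a ∈ s, ∑ b ∈ s, x a ^ p / (x b - x a)
      = ∑ a ∈ s, ∑ b ∈ s, x b ^ p / (x a - x b) := sum_comm
  have hprod : ∑ i ∈ range p, (∑ a ∈ s, x a ^ (p - 1 - i)) * ∑ a ∈ s, x a ^ i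
      = ∑ a ∈ s, ∑ b ∈ s, ∑ i ∈ range p, x a ^ i * x b ^ (p - 1 - i) := by
    calc _ = ∑ i ∈ range p, ∑ a ∈ s, ∑ b ∈ s, x a ^ i * x b ^ (p - 1 - i) :=
          sum_congr rfl fun i _ => by rw [mul_comm, sum_mul_sum]
      _ = _ := by rw [sum_comm]; exact sum_congr rfl fun a _ => sum_comm
  have hdiag : ∀ a ∈ s, ∑ b ∈ s, (if x a = x b then (p : K) * x a ^ (p - 1) else 0)
      = p * x a ^ (p - 1) := fun a ha => by
    rw [sum_congr rfl fun b hb => if_congr (hx.eq_iff ha hb) rfl rfl, sum_ite_eq, if_pos ha]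
  have hsum : 2 * ∑ a ∈ s, ∑ b ∈ s, x a ^ p / (x b - x a)
      + ∑ i ∈ range p, (∑ a ∈ s, x a ^ (p - 1 - i)) * ∑ a ∈ s, x a ^ i
      = p * ∑ a ∈ s, x a ^ (p - 1) := by
    rw [two_mul, hprod]
    nth_rewrite 2 [hswap]
    simp only [← sum_add_distrib, pow_div_sub_add_pow_div_sub_add_geom_sum₂]
    rw [sum_congr rfl hdiag, mul_sum]
  exact eq_sub_of_add_eq hsum

end PowerSums

theorem Finset.sum_sum_erase_eq_sum_sum_add_sum_compl_sum {ι M : Type*} [Fintype ι]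
    [DecidableEq ι] [AddCommMonoid M] (s : Finset ι) {f : ι → ι → M} (hf : ∀ a, f a a = 0) :
    ∑ a ∈ s, ∑ b ∈ univ.erase a, f a b = ∑ a ∈ s, ∑ b ∈ s, f a b + ∑ b ∈ sᶜ, ∑ a ∈ s, f a b := by
  simp only [sum_erase _ (hf _), ← sum_add_sum_compl s (f _), sum_add_distrib]
  rw [sum_comm (s := s) (t := sᶜ)]

theorem sum_mul_richardson_eq {ι κ K : Type*} [Fintype ι] [DecidableEq ι] [Fintype κ] [Field K]
    (C : Finset ι) (w : ι → K) (c : K) (d ε : κ → K) (e : ι → K) :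
    ∑ α ∈ C, w α * (1 - c * ∑ j, d j / (ε j - e α) + c * ∑ β ∈ univ.erase α, 1 / (e α - e β))
      = ∑ α ∈ C, w α - c * ∑ j, d j * ∑ α ∈ C, w α / (ε j - e α)
        + c * ∑ α ∈ C, ∑ β ∈ univ.erase α, w α / (e α - e β) := by
  simp only [mul_add, mul_sub, mul_one, sum_add_distrib, sum_sub_distrib, mul_sum]
  rw [sum_comm (s := C) (t := univ)]
  congr 2
  · exact sum_congr rfl fun _ _ => sum_congr rfl fun _ _ => by ring
  · exact funext fun _ => sum_congr rfl fun _ _ => by ring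

theorem stmt_1_general
    (M L : ℕ)
    (η : Fin L → ℝ) (d : Fin L → ℝ)
    (g : ℝ) (e : Fin M → ℂ)
    (he : Function.Injective e)
    (hed : ∀ α j, e α ≠ 2 * (η j : ℂ))
    (hrich : ∀ α, (1 : ℂ) - 4 * g * ∑ j, (d j : ℂ) / (2 * (η j : ℂ) - e α)
        + 4 * g * ∑ β ∈ univ.erase α, 1 / (e α - e β) = 0)
    (k : Fin L) (C : Finset (Fin M))
    (S : ℕ → ℂ) (hS : ∀ q, S q = ∑ α ∈ C, (2 * (η k : ℂ) - e α) ^ q)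
    (p : ℕ) (hp : 1 ≤ p) :
    S p - 4 * g * (d k : ℂ) * S (p - 1) + 2 * g * (p : ℂ) * S (p - 1)
      - 2 * g * ∑ i ∈ range p, S (p - 1 - i) * S i
      - 4 * g * ∑ j ∈ univ.erase k, (d j : ℂ) *
          ∑ α ∈ C, (2 * (η k : ℂ) - e α) ^ p / (2 * (η j : ℂ) - e α)
      + 4 * g * ∑ β ∈ Cᶜ, ∑ α ∈ C, (2 * (η k : ℂ) - e α) ^ p / (e α - e β) = 0 := by
  have hweighted : ∑ α ∈ C, (2 * (η k : ℂ) - e α) ^ p * ((1 : ℂ)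
      - 4 * g * ∑ j, (d j : ℂ) / (2 * (η j : ℂ) - e α)
      + 4 * g * ∑ β ∈ univ.erase α, 1 / (e α - e β)) = 0 :=
    sum_eq_zero fun α _ => by rw [hrich α, mul_zero]
  have hself : ∑ α ∈ C, (2 * (η k : ℂ) - e α) ^ p / (2 * (η k : ℂ) - e α) = S (p - 1) := by
    rw [hS]
    refine sum_congr rfl fun α _ => ?_
    rw [← pow_sub_one_mul (by omega), mul_div_cancel_right₀ _ (sub_ne_zero.mpr (hed α k).symm)]
  rw [sum_mul_richardson_eq, ← add_sum_erase _ _ (mem_univ k), hself,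
    sum_sum_erase_eq_sum_sum_add_sum_compl_sum C (fun α => by rw [sub_self, div_zero]),
    ← hS] at hweighted
  have hsym := two_mul_sum_sum_pow_div_sub
    (s := C) (x := fun α => 2 * (η k : ℂ) - e α) (fun a _ b _ h => he (sub_right_injective h)) p
  simp only [sub_sub_sub_cancel_left, ← hS] at hsym
  linear_combination hweighted - 2 * g * hsym

/-- If `e 1, …, e M` satisfy the Richardson equations at coupling `g`, then for every
integer `p ≥ 1` the transformed cluster equation holds. -/
theorem stmt_1
    (M L : ℕ) (hM : 1 ≤ M) (hL : 1 ≤ L)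
    (η : Fin L → ℝ) (hη : Function.Injective η) (d : Fin L → ℝ)
    (g : ℝ) (e : Fin M → ℂ)
    (he : Function.Injective e)
    (hed : ∀ α j, e α ≠ 2 * (η j : ℂ))
    (hrich : ∀ α, (1 : ℂ) - 4 * g * ∑ j, (d j : ℂ) / (2 * (η j : ℂ) - e α)
        + 4 * g * ∑ β ∈ univ.erase α, 1 / (e α - e β) = 0)
    (k : Fin L) (C : Finset (Fin M)) (Mk : ℕ) (hMk : C.card = Mk) (hMk1 : 1 ≤ Mk)
    (S : ℕ → ℂ) (hS : ∀ q, S q = ∑ α ∈ C, (2 * (η k : ℂ) - e α) ^ q)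
    (p : ℕ) (hp : 1 ≤ p) :
    S p - 4 * g * (d k : ℂ) * S (p - 1) + 2 * g * (p : ℂ) * S (p - 1)
      - 2 * g * ∑ i ∈ range p, S (p - 1 - i) * S i
      - 4 * g * ∑ j ∈ univ.erase k, (d j : ℂ) *
          ∑ α ∈ C, (2 * (η k : ℂ) - e α) ^ p / (2 * (η j : ℂ) - e α)
      + 4 * g * ∑ β ∈ Cᶜ, ∑ α ∈ C, (2 * (η k : ℂ) - e α) ^ p / (e α - e β) = 0 :=
  stmt_1_general M L η d g e he hed hrich k C S hS p hp
end

section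
/- Suppose e_1, …, e_M satisfy the Richardson equations at coupling g and that max_{α∈C} |x_α| < |2η_k − 2η_j| for all j ≠ k and max_{α∈C} |x_α| < |2η_k − e_β| for all β ∉ C. Then the series Σ_{n=0}^∞ S_{1+n}·P_n converges absolutely and S_1 − 4g·d_k·M_k − 2g·(M_k² − M_k) + 4g·Σ_{n=0}^∞ S_{1+n}·P_n = 0. -/
/-!
Multiply the Richardson equation of each `α ∈ C` by `x_α = 2η_k - e_α` and sum over the cluster.
The pole `j = k` contributes `d_k` per root; the pairs `α ≠ β` inside `C` contribute `-1` each after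
symmetrisation, since `x_α / (e_α - e_β) + x_β / (e_β - e_α) = -1`; every remaining term has the
form `w · x_α / (c - x_α)` with `|x_α| < |c|`, and expanding it as a geometric series in `x_α / c`
turns the sum over `α` into the power sums `S_{n+1}` and the sum over the far poles into `P_n`.
-/

open Finset

section GeometricExpansion

variable {𝕜 ι κ : Type*} [NormedField 𝕜]

lemma norm_div_lt_one_of_norm_lt {x c : 𝕜} (h : ‖x‖ < ‖c‖) : ‖x / c‖ < 1 := by
  rw [norm_div]
  exact (div_lt_one ((norm_nonneg x).trans_lt h)).2 h

lemma hasSum_div_pow_succ {x c : 𝕜} (h : ‖x‖ < ‖c‖) :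
    HasSum (fun n : ℕ => (x / c) ^ (n + 1)) (x / (c - x)) := by
  have hc : c ≠ 0 := norm_pos_iff.1 ((norm_nonneg x).trans_lt h)
  have hcx : c - x ≠ 0 := sub_ne_zero.2 fun hcx => h.ne (by rw [hcx])
  have h_geom :=
    (hasSum_geometric_of_norm_lt_one (norm_div_lt_one_of_norm_lt h)).mul_left (x / c)
  rw [show x / c * (1 - x / c)⁻¹ = x / (c - x) by field_simp] at h_geom
  simpa only [← pow_succ'] using h_geom

lemma summable_norm_div_pow_succ {x c : 𝕜} (h : ‖x‖ < ‖c‖) :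
    Summable fun n : ℕ => ‖(x / c) ^ (n + 1)‖ := by
  simpa only [norm_pow] using (summable_nat_add_iff 1).2
    (summable_geometric_of_lt_one (norm_nonneg _) (norm_div_lt_one_of_norm_lt h))

lemma sum_pow_succ_mul_sum_div_pow_succ (s : Finset ι) (t : Finset κ) (x : ι → 𝕜)
    (w c : κ → 𝕜) (n : ℕ) :
    (∑ a ∈ s, x a ^ (n + 1)) * ∑ b ∈ t, w b / c b ^ (n + 1)
      = ∑ a ∈ s, ∑ b ∈ t, w b * (x a / c b) ^ (n + 1) := by
  rw [sum_mul_sum]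
  exact sum_congr rfl fun a _ => sum_congr rfl fun b _ => by ring

variable (s : Finset ι) (t : Finset κ) {x : ι → 𝕜} {c : κ → 𝕜}

theorem hasSum_sum_pow_succ_mul_sum_div_pow_succ (w : κ → 𝕜)
    (h : ∀ a ∈ s, ∀ b ∈ t, ‖x a‖ < ‖c b‖) :
    HasSum (fun n : ℕ => (∑ a ∈ s, x a ^ (n + 1)) * ∑ b ∈ t, w b / c b ^ (n + 1))
      (∑ a ∈ s, ∑ b ∈ t, w b * (x a / (c b - x a))) := by
  simp only [sum_pow_succ_mul_sum_div_pow_succ]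
  exact hasSum_sum fun a ha => hasSum_sum fun b hb =>
    (hasSum_div_pow_succ (h a ha b hb)).mul_left (w b)

theorem summable_norm_sum_pow_succ_mul_sum_div_pow_succ (w : κ → 𝕜)
    (h : ∀ a ∈ s, ∀ b ∈ t, ‖x a‖ < ‖c b‖) :
    Summable fun n : ℕ => ‖(∑ a ∈ s, x a ^ (n + 1)) * ∑ b ∈ t, w b / c b ^ (n + 1)‖ := by
  simp only [sum_pow_succ_mul_sum_div_pow_succ]
  refine Summable.of_nonneg_of_le (fun _ => norm_nonneg _)
    (fun n => (norm_sum_le _ _).trans (sum_le_sum fun a _ => norm_sum_le _ _))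
    (summable_sum fun a ha => summable_sum fun b hb => ?_)
  simpa only [norm_mul] using (summable_norm_div_pow_succ (h a ha b hb)).mul_left ‖w b‖

end GeometricExpansion

section Richardson

variable {K ι κ : Type*} [Field K] [DecidableEq ι]

theorem two_mul_sum_sum_erase_div_sub {s : Finset ι} {e : ι → K} (he : Set.InjOn e s) (z : K) :
    2 * ∑ a ∈ s, ∑ b ∈ s.erase a, (z - e a) / (e a - e b) = -((#s : K) ^ 2 - #s) := by
  have h_swap : ∑ a ∈ s, ∑ b ∈ s.erase a, (z - e a) / (e a - e b)
      = ∑ a ∈ s, ∑ b ∈ s.erase a, (z - e b) / (e b - e a) :=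
    sum_comm' fun a b => by
      simp only [mem_erase]
      exact ⟨fun ⟨ha, hba, hb⟩ => ⟨⟨Ne.symm hba, ha⟩, hb⟩,
        fun ⟨⟨hab, ha⟩, hb⟩ => ⟨ha, Ne.symm hab, hb⟩⟩
  have h_pair : ∀ a ∈ s, ∀ b ∈ s.erase a,
      (z - e a) / (e a - e b) + (z - e b) / (e b - e a) = -1 := by
    intro a ha b hb
    obtain ⟨hba, hb⟩ := mem_erase.1 hb
    have hab : e a - e b ≠ 0 := sub_ne_zero.2 fun h => hba (he hb ha h.symm)
    rw [← neg_sub (e a) (e b), div_neg, ← sub_eq_add_neg, ← sub_div, sub_sub_sub_cancel_left,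
      ← neg_sub (e a) (e b), neg_div, div_self hab]
  calc 2 * ∑ a ∈ s, ∑ b ∈ s.erase a, (z - e a) / (e a - e b)
      = ∑ a ∈ s, ∑ b ∈ s.erase a, ((z - e a) / (e a - e b) + (z - e b) / (e b - e a)) := by
        rw [two_mul]
        nth_rw 2 [h_swap]
        simp only [← sum_add_distrib]
    _ = ∑ a ∈ s, ((#s : K) - 1) * -1 := by
        refine sum_congr rfl fun a ha => ?_
        rw [sum_congr rfl (h_pair a ha), sum_const, card_erase_of_mem ha, nsmul_eq_mul,
          Nat.cast_pred (card_pos.2 ⟨a, ha⟩)]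
    _ = -((#s : K) ^ 2 - #s) := by
        rw [sum_const, nsmul_eq_mul]
        ring

variable [Fintype ι] [Fintype κ] [DecidableEq κ] {e : ι → K} {ν d : κ → K} {g : K} {k : κ}

theorem richardson_mul_sub_split (C : Finset ι) {α : ι} (hαk : e α ≠ ν k)
    (hrich : 1 - 4 * g * ∑ j, d j / (ν j - e α)
      + 4 * g * ∑ β ∈ univ.erase α, 1 / (e α - e β) = 0) :
    (ν k - e α) - 4 * g * d k
      + 4 * g * ∑ j ∈ univ.erase k, d j * ((ν k - e α) / ((ν k - ν j) - (ν k - e α)))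
      + 4 * g * ∑ β ∈ C.erase α, (ν k - e α) / (e α - e β)
      + 4 * g * ∑ β ∈ Cᶜ, (ν k - e α) / ((ν k - e β) - (ν k - e α)) = 0 := by
  have h_poles : (ν k - e α) * ∑ j, d j / (ν j - e α)
      = d k - ∑ j ∈ univ.erase k, d j * ((ν k - e α) / ((ν k - ν j) - (ν k - e α))) := by
    rw [← add_sum_erase _ _ (mem_univ k), mul_add, mul_div_left_comm,
      div_self (sub_ne_zero.2 hαk.symm), mul_one, mul_sum, sub_eq_add_neg (d k), ← sum_neg_distrib]
    refine congrArg _ (sum_congr rfl fun j _ => ?_)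
    rw [show ν k - ν j - (ν k - e α) = -(ν j - e α) by ring, div_neg]
    ring
  have h_pairs : (ν k - e α) * ∑ β ∈ univ.erase α, 1 / (e α - e β)
      = ∑ β ∈ C.erase α, (ν k - e α) / (e α - e β)
        + ∑ β ∈ Cᶜ, (ν k - e α) / ((ν k - e β) - (ν k - e α)) := by
    rw [mul_sum, sum_erase univ (by simp), ← sum_add_sum_compl C,
      sum_erase C (by simp)]
    refine congrArg₂ _ (sum_congr rfl fun β _ => ?_) (sum_congr rfl fun β _ => ?_)
    · ring
    · rw [show ν k - e β - (ν k - e α) = e α - e β by ring]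
      ring
  linear_combination (ν k - e α) * hrich + 4 * g * h_poles - 4 * g * h_pairs

theorem richardson_cluster_sum_rule (C : Finset ι) (he : Set.InjOn e C) (hek : ∀ α ∈ C, e α ≠ ν k)
    (hrich : ∀ α ∈ C, 1 - 4 * g * ∑ j, d j / (ν j - e α)
      + 4 * g * ∑ β ∈ univ.erase α, 1 / (e α - e β) = 0) :
    ∑ α ∈ C, (ν k - e α) - 4 * g * d k * #C - 2 * g * ((#C : K) ^ 2 - #C)
      + 4 * g * (∑ α ∈ C, ∑ j ∈ univ.erase k, d j * ((ν k - e α) / ((ν k - ν j) - (ν k - e α)))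
        + ∑ α ∈ C, ∑ β ∈ Cᶜ, (ν k - e α) / ((ν k - e β) - (ν k - e α))) = 0 := by
  have h := sum_eq_zero fun α hα => richardson_mul_sub_split C (hek α hα) (hrich α hα)
  simp only [sum_add_distrib, sum_sub_distrib, ← mul_sum, sum_const, nsmul_eq_mul] at h ⊢
  linear_combination h - 2 * g * two_mul_sum_sum_erase_div_sub he (ν k)

end Richardson

theorem stmt_4_general
    (M L : ℕ)
    (η : Fin L → ℝ) (d : Fin L → ℝ)
    (g : ℝ) (e : Fin M → ℂ)
    (he : Function.Injective e)
    (hed : ∀ α j, e α ≠ 2 * (η j : ℂ))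
    (hrich : ∀ α, (1 : ℂ) - 4 * g * ∑ j, (d j : ℂ) / (2 * (η j : ℂ) - e α)
        + 4 * g * ∑ β ∈ univ.erase α, 1 / (e α - e β) = 0)
    (k : Fin L) (C : Finset (Fin M)) (Mk : ℕ) (hMk : C.card = Mk)
    (hCne : C.Nonempty)
    (S : ℕ → ℂ) (hS : ∀ q, S q = ∑ α ∈ C, (2 * (η k : ℂ) - e α) ^ q)
    (P : ℕ → ℂ)
    (hP : ∀ n, P n = ∑ j ∈ univ.erase k, (d j : ℂ) / (2 * (η k : ℂ) - 2 * (η j : ℂ)) ^ (n + 1)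
        + ∑ β ∈ Cᶜ, 1 / (2 * (η k : ℂ) - e β) ^ (n + 1))
    (hmaxη : ∀ j, j ≠ k →
      (C.sup' hCne fun α => ‖2 * (η k : ℂ) - e α‖) < ‖2 * (η k : ℂ) - 2 * (η j : ℂ)‖)
    (hmaxe : ∀ β, β ∉ C →
      (C.sup' hCne fun α => ‖2 * (η k : ℂ) - e α‖) < ‖2 * (η k : ℂ) - e β‖) :
    (Summable fun n : ℕ => ‖S (1 + n) * P n‖) ∧
      S 1 - 4 * g * (d k : ℂ) * (Mk : ℂ) - 2 * g * ((Mk : ℂ) ^ 2 - (Mk : ℂ))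
        + 4 * g * ∑' n : ℕ, S (1 + n) * P n = 0 := by
  subst hMk
  have hx_le : ∀ α ∈ C, ‖2 * (η k : ℂ) - e α‖ ≤ C.sup' hCne fun α => ‖2 * (η k : ℂ) - e α‖ :=
    fun α hα => le_sup' (fun α => ‖2 * (η k : ℂ) - e α‖) hα
  have h_poles : ∀ α ∈ C, ∀ j ∈ univ.erase k,
      ‖2 * (η k : ℂ) - e α‖ < ‖2 * (η k : ℂ) - 2 * (η j : ℂ)‖ :=
    fun α hα j hj => (hx_le α hα).trans_lt (hmaxη j (ne_of_mem_erase hj))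
  have h_roots : ∀ α ∈ C, ∀ β ∈ Cᶜ, ‖2 * (η k : ℂ) - e α‖ < ‖2 * (η k : ℂ) - e β‖ :=
    fun α hα β hβ => (hx_le α hα).trans_lt (hmaxe β (mem_compl.1 hβ))
  have h_term : ∀ n, S (1 + n) * P n
      = (∑ α ∈ C, (2 * (η k : ℂ) - e α) ^ (n + 1))
          * ∑ j ∈ univ.erase k, (d j : ℂ) / (2 * (η k : ℂ) - 2 * (η j : ℂ)) ^ (n + 1)
        + (∑ α ∈ C, (2 * (η k : ℂ) - e α) ^ (n + 1))
          * ∑ β ∈ Cᶜ, 1 / (2 * (η k : ℂ) - e β) ^ (n + 1) := fun n => by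
    rw [hS, hP, add_comm 1 n, mul_add]
  refine ⟨Summable.of_nonneg_of_le (fun _ => norm_nonneg _)
    (fun n => by rw [h_term]; exact norm_add_le _ _)
    ((summable_norm_sum_pow_succ_mul_sum_div_pow_succ _ _ _ h_poles).add
      (summable_norm_sum_pow_succ_mul_sum_div_pow_succ _ _ (fun _ => 1) h_roots)), ?_⟩
  rw [tsum_congr h_term, ((hasSum_sum_pow_succ_mul_sum_div_pow_succ _ _ _ h_poles).add
    (hasSum_sum_pow_succ_mul_sum_div_pow_succ _ _ (fun _ => 1) h_roots)).tsum_eq, hS 1]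
  simp only [pow_one, one_mul]
  exact richardson_cluster_sum_rule (ν := fun j => 2 * (η j : ℂ)) (d := fun j => (d j : ℂ))
    C he.injOn (fun α _ => hed α k) (fun α _ => hrich α)

/-- If the Richardson equations hold at coupling `g` and `max_{α∈C} |x α|` is smaller
than `|2η k - 2η j|` for all `j ≠ k` and than `|2η k - e β|` for all `β ∉ C`, then the
series `Σ_n S (1+n) · P n` converges absolutely and
`S 1 - 4g·d k·Mk - 2g·(Mk² - Mk) + 4g·Σ_n S (1+n)·P n = 0`. -/
theorem stmt_4
    (M L : ℕ) (hM : 1 ≤ M) (hL : 1 ≤ L)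
    (η : Fin L → ℝ) (hη : Function.Injective η) (d : Fin L → ℝ)
    (g : ℝ) (e : Fin M → ℂ)
    (he : Function.Injective e)
    (hed : ∀ α j, e α ≠ 2 * (η j : ℂ))
    (hrich : ∀ α, (1 : ℂ) - 4 * g * ∑ j, (d j : ℂ) / (2 * (η j : ℂ) - e α)
        + 4 * g * ∑ β ∈ univ.erase α, 1 / (e α - e β) = 0)
    (k : Fin L) (C : Finset (Fin M)) (Mk : ℕ) (hMk : C.card = Mk) (hMk1 : 1 ≤ Mk)
    (hCne : C.Nonempty)
    (S : ℕ → ℂ) (hS : ∀ q, S q = ∑ α ∈ C, (2 * (η k : ℂ) - e α) ^ q)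
    (P : ℕ → ℂ)
    (hP : ∀ n, P n = ∑ j ∈ univ.erase k, (d j : ℂ) / (2 * (η k : ℂ) - 2 * (η j : ℂ)) ^ (n + 1)
        + ∑ β ∈ Cᶜ, 1 / (2 * (η k : ℂ) - e β) ^ (n + 1))
    (hmaxη : ∀ j, j ≠ k →
      (C.sup' hCne fun α => ‖2 * (η k : ℂ) - e α‖) < ‖2 * (η k : ℂ) - 2 * (η j : ℂ)‖)
    (hmaxe : ∀ β, β ∉ C →
      (C.sup' hCne fun α => ‖2 * (η k : ℂ) - e α‖) < ‖2 * (η k : ℂ) - e β‖) :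
    (Summable fun n : ℕ => ‖S (1 + n) * P n‖) ∧
      S 1 - 4 * g * (d k : ℂ) * (Mk : ℂ) - 2 * g * ((Mk : ℂ) ^ 2 - (Mk : ℂ))
        + 4 * g * ∑' n : ℕ, S (1 + n) * P n = 0 :=
  stmt_4_general M L η d g e he hed hrich k C Mk hMk hCne S hS P hP hmaxη hmaxe
end

section
/- Suppose e_1, …, e_M satisfy the Richardson equations at coupling g and let α ∉ C be an index with |x_γ| < |2η_k − e_α| for every γ ∈ C. Then the series Σ_{n=0}^∞ S_n/(2η_k − e_α)^{n+1} converges absolutely and 1 − 4g·Σ_{j=1}^L d_j/(2η_j − e_α) + 4g·Σ_{β∉C, β≠α} 1/(e_α − e_β) − 4g·Σ_{n=0}^∞ S_n/(2η_k − e_α)^{n+1} = 0. -/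
open Finset

/-!
Outside the cluster, `1 / (2η_k - e_α - x_γ)` expands as the geometric series
`Σ_n x_γ^n / (2η_k - e_α)^(n+1)`, absolutely convergent because `|x_γ| < |2η_k - e_α|`.
Summing over `γ ∈ C` turns the cluster part `Σ_{γ∈C} 1/(e_α - e_γ)` of the Richardson
equation for `e_α` into `-Σ_n S_n / (2η_k - e_α)^(n+1)`.
-/

section GeometricExpansion

variable {K : Type*} [NormedField K] {x w : K}

lemma pow_div_pow_succ_eq_div_pow_mul_inv (x w : K) (n : ℕ) :
    x ^ n / w ^ (n + 1) = (x / w) ^ n * w⁻¹ := by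
  rw [div_pow, pow_succ, div_mul_eq_div_div, div_eq_mul_inv]

lemma norm_div_lt_one_of_norm_lt_norm (hxw : ‖x‖ < ‖w‖) : ‖x / w‖ < 1 := by
  rw [norm_div, div_lt_one ((norm_nonneg x).trans_lt hxw)]
  exact hxw

lemma summable_norm_pow_div_pow_succ (hxw : ‖x‖ < ‖w‖) :
    Summable fun n : ℕ => ‖x ^ n / w ^ (n + 1)‖ := by
  simp_rw [pow_div_pow_succ_eq_div_pow_mul_inv, norm_mul]
  exact (summable_norm_geometric_of_norm_lt_one
    (norm_div_lt_one_of_norm_lt_norm hxw)).mul_right _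

lemma hasSum_pow_div_pow_succ (hxw : ‖x‖ < ‖w‖) :
    HasSum (fun n : ℕ => x ^ n / w ^ (n + 1)) (w - x)⁻¹ := by
  have hw : w ≠ 0 := norm_pos_iff.mp ((norm_nonneg x).trans_lt hxw)
  have hvalue : (1 - x / w)⁻¹ * w⁻¹ = (w - x)⁻¹ := by
    rw [← mul_inv, sub_mul, div_mul_cancel₀ x hw, one_mul]
  simp_rw [pow_div_pow_succ_eq_div_pow_mul_inv, ← hvalue]
  exact (hasSum_geometric_of_norm_lt_one (norm_div_lt_one_of_norm_lt_norm hxw)).mul_right _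

variable {ι : Type*} {C : Finset ι} {x : ι → K}

lemma summable_norm_powerSum_div_pow_succ (hxw : ∀ γ ∈ C, ‖x γ‖ < ‖w‖) :
    Summable fun n : ℕ => ‖(∑ γ ∈ C, x γ ^ n) / w ^ (n + 1)‖ := by
  refine Summable.of_nonneg_of_le (fun n => norm_nonneg _) (fun n => ?_)
    (summable_sum fun γ hγ => summable_norm_pow_div_pow_succ (hxw γ hγ))
  rw [sum_div]
  exact norm_sum_le _ _

lemma hasSum_powerSum_div_pow_succ (hxw : ∀ γ ∈ C, ‖x γ‖ < ‖w‖) :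
    HasSum (fun n : ℕ => (∑ γ ∈ C, x γ ^ n) / w ^ (n + 1)) (∑ γ ∈ C, (w - x γ)⁻¹) := by
  simp_rw [sum_div]
  exact hasSum_sum fun γ hγ => hasSum_pow_div_pow_succ (hxw γ hγ)

end GeometricExpansion

lemma sum_erase_eq_sum_compl_erase_add_sum {ι M : Type*} [Fintype ι] [DecidableEq ι]
    [AddCommMonoid M] (f : ι → M) {C : Finset ι} {α : ι} (hα : α ∉ C) :
    ∑ β ∈ univ.erase α, f β = ∑ β ∈ Cᶜ.erase α, f β + ∑ β ∈ C, f β := by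
  have hunion : univ.erase α = Cᶜ.erase α ∪ C := by
    ext β
    by_cases hβ : β ∈ C <;> aesop
  rw [hunion, sum_union (disjoint_compl_left.mono_left (erase_subset α Cᶜ))]

theorem stmt_6_general
    (M L : ℕ)
    (η : Fin L → ℝ) (d : Fin L → ℝ)
    (g : ℝ) (e : Fin M → ℂ)
    (hrich : ∀ α, (1 : ℂ) - 4 * g * ∑ j, (d j : ℂ) / (2 * (η j : ℂ) - e α)
        + 4 * g * ∑ β ∈ univ.erase α, 1 / (e α - e β) = 0)
    (k : Fin L) (C : Finset (Fin M))
    (S : ℕ → ℂ) (hS : ∀ q, S q = ∑ γ ∈ C, (2 * (η k : ℂ) - e γ) ^ q)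
    (α : Fin M) (hα : α ∉ C)
    (hlt : ∀ γ ∈ C, ‖2 * (η k : ℂ) - e γ‖ < ‖2 * (η k : ℂ) - e α‖) :
    (Summable fun n : ℕ => ‖S n / (2 * (η k : ℂ) - e α) ^ (n + 1)‖) ∧
      (1 : ℂ) - 4 * g * ∑ j, (d j : ℂ) / (2 * (η j : ℂ) - e α)
        + 4 * g * ∑ β ∈ Cᶜ.erase α, 1 / (e α - e β)
        - 4 * g * ∑' n : ℕ, S n / (2 * (η k : ℂ) - e α) ^ (n + 1) = 0 := by
  obtain rfl : S = fun q => ∑ γ ∈ C, (2 * (η k : ℂ) - e γ) ^ q := funext hS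
  refine ⟨summable_norm_powerSum_div_pow_succ hlt, ?_⟩
  have hcluster : ∑ γ ∈ C, (2 * (η k : ℂ) - e α - (2 * η k - e γ))⁻¹
      = -∑ γ ∈ C, 1 / (e α - e γ) := by
    rw [← sum_neg_distrib]
    refine sum_congr rfl fun γ _ => ?_
    rw [one_div, ← inv_neg]
    ring_nf
  rw [(hasSum_powerSum_div_pow_succ hlt).tsum_eq, hcluster]
  linear_combination
    hrich α - 4 * g * sum_erase_eq_sum_compl_erase_add_sum (fun β => 1 / (e α - e β)) hα

/-- If the Richardson equations hold at coupling `g` and `α ∉ C` satisfies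
`|x γ| < |2η k - e α|` for every `γ ∈ C`, then the series
`Σ_n S n / (2η k - e α)^(n+1)` converges absolutely and
`1 - 4g·Σ_j d j/(2η j - e α) + 4g·Σ_{β∉C, β≠α} 1/(e α - e β)
  - 4g·Σ_n S n/(2η k - e α)^(n+1) = 0`. -/
theorem stmt_6
    (M L : ℕ) (hM : 1 ≤ M) (hL : 1 ≤ L)
    (η : Fin L → ℝ) (hη : Function.Injective η) (d : Fin L → ℝ)
    (g : ℝ) (e : Fin M → ℂ)
    (he : Function.Injective e)
    (hed : ∀ α j, e α ≠ 2 * (η j : ℂ))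
    (hrich : ∀ α, (1 : ℂ) - 4 * g * ∑ j, (d j : ℂ) / (2 * (η j : ℂ) - e α)
        + 4 * g * ∑ β ∈ univ.erase α, 1 / (e α - e β) = 0)
    (k : Fin L) (C : Finset (Fin M)) (Mk : ℕ) (hMk : C.card = Mk) (hMk1 : 1 ≤ Mk)
    (S : ℕ → ℂ) (hS : ∀ q, S q = ∑ γ ∈ C, (2 * (η k : ℂ) - e γ) ^ q)
    (α : Fin M) (hα : α ∉ C)
    (hlt : ∀ γ ∈ C, ‖2 * (η k : ℂ) - e γ‖ < ‖2 * (η k : ℂ) - e α‖) :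
    (Summable fun n : ℕ => ‖S n / (2 * (η k : ℂ) - e α) ^ (n + 1)‖) ∧
      (1 : ℂ) - 4 * g * ∑ j, (d j : ℂ) / (2 * (η j : ℂ) - e α)
        + 4 * g * ∑ β ∈ Cᶜ.erase α, 1 / (e α - e β)
        - 4 * g * ∑' n : ℕ, S n / (2 * (η k : ℂ) - e α) ^ (n + 1) = 0 :=
  stmt_6_general M L η d g e hrich k C S hS α hα hlt
end

section
/- At a critical point g_c, the number M_k of pair energies that collapse onto 2η_k satisfies the cluster condition M_k = 1 − 2d_k. -/
open Finset Filter Topology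

/-!
Multiply the `α`-th Richardson equation by `e_α - 2η_k` and sum over the cluster `α ∈ C`.
The pole term `d_k / (2η_k - e_α)` then contributes exactly `-d_k` for each `α`, and the pair
terms inside the cluster symmetrise via `(e_α - 2η_k)/(e_α - e_β) + (e_β - 2η_k)/(e_β - e_α) = 1`
to `M_k (M_k - 1) / 2`. Every other term is `e_α - 2η_k` times a quantity that stays bounded,
so letting `g → g_c` gives `4 g_c M_k d_k + 2 g_c M_k (M_k - 1) = 0`, i.e. `M_k = 1 - 2 d_k`.
-/

theorem two_mul_sum_sum_erase_sub_div_sub {σ 𝕜 : Type*} [DecidableEq σ] [Field 𝕜]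
    {s : Finset σ} {x : σ → 𝕜} (hx : Set.InjOn x s) (c : 𝕜) :
    2 * ∑ α ∈ s, ∑ β ∈ s.erase α, (x α - c) / (x α - x β) = #s * (#s - 1) := by
  have hswap : ∑ α ∈ s, ∑ β ∈ s.erase α, (x α - c) / (x α - x β)
      = ∑ α ∈ s, ∑ β ∈ s.erase α, (x β - c) / (x β - x α) :=
    sum_comm' fun α β => by simp only [mem_erase]; tauto
  have hpair : ∀ α ∈ s, ∀ β ∈ s.erase α,
      (x α - c) / (x α - x β) + (x β - c) / (x β - x α) = 1 := by
    intro α hα β hβ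
    have hne : x α - x β ≠ 0 :=
      sub_ne_zero.2 fun h => (mem_erase.1 hβ).1 (hx (mem_erase.1 hβ).2 hα h.symm)
    rw [← neg_sub (x α), div_neg, ← sub_eq_add_neg, ← sub_div, sub_sub_sub_cancel_right,
      div_self hne]
  calc 2 * ∑ α ∈ s, ∑ β ∈ s.erase α, (x α - c) / (x α - x β)
      = ∑ α ∈ s, ∑ β ∈ s.erase α, ((x α - c) / (x α - x β) + (x β - c) / (x β - x α)) := by
        rw [two_mul]; nth_rw 2 [hswap]; simp only [← sum_add_distrib]
    _ = ∑ α ∈ s, ((#s : 𝕜) - 1) := sum_congr rfl fun α hα => by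
        rw [sum_congr rfl (hpair α hα), sum_const, nsmul_one, cast_card_erase_of_mem hα]
    _ = #s * (#s - 1) := by rw [sum_const, nsmul_eq_mul]

noncomputable section Richardson

variable {ι σ : Type*} [Fintype ι] [DecidableEq ι] [Fintype σ] [DecidableEq σ]
  (η d : ι → ℝ) (k : ι) (C : Finset σ)

def richardsonLHS (g : ℝ) (x : σ → ℂ) (α : σ) : ℂ :=
  1 - 4 * g * ∑ j, (d j : ℂ) / (2 * (η j : ℂ) - x α)
    + 4 * g * ∑ β ∈ univ.erase α, 1 / (x α - x β)

def richardsonLHSOutside (g : ℝ) (x : σ → ℂ) (α : σ) : ℂ :=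
  1 - 4 * g * ∑ j ∈ univ.erase k, (d j : ℂ) / (2 * (η j : ℂ) - x α)
    + 4 * g * ∑ β ∈ Cᶜ, 1 / (x α - x β)

variable {η d k C}

theorem sub_mul_richardsonLHS {g : ℝ} {x : σ → ℂ} {α : σ} (hxα : x α ≠ 2 * η k) :
    (x α - 2 * η k) * richardsonLHS η d g x α
      = (x α - 2 * η k) * richardsonLHSOutside η d k C g x α + 4 * g * d k
        + 4 * g * ∑ β ∈ C.erase α, (x α - 2 * η k) / (x α - x β) := by
  have hpole : (x α - 2 * η k) * ((d k : ℂ) / (2 * η k - x α)) = -d k := by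
    rw [← neg_sub, neg_mul, mul_div_cancel₀ _ (sub_ne_zero.2 hxα.symm)]
  -- the `β = α` term vanishes (`1 / 0 = 0`), so the pair sum may run over all of `C`
  have hself : 1 / (x α - x α) = 0 := by rw [sub_self, div_zero]
  have hcluster : ∑ β ∈ C.erase α, (x α - 2 * η k) / (x α - x β)
      = (x α - 2 * η k) * ∑ β ∈ C, 1 / (x α - x β) := by
    rw [← sum_erase C (f := fun β => 1 / (x α - x β)) hself, mul_sum]
    simp only [mul_one_div]
  rw [richardsonLHS, richardsonLHSOutside, ← add_sum_erase _ _ (mem_univ k),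
    sum_erase univ (f := fun β => 1 / (x α - x β)) hself, ← sum_add_sum_compl C, hcluster]
  linear_combination (-4 * (g : ℂ)) * hpole

theorem sum_sub_mul_richardsonLHSOutside_add_eq_zero {g : ℝ} {x : σ → ℂ} (hx : Set.InjOn x C)
    (hxC : ∀ α ∈ C, x α ≠ 2 * η k) (hR : ∀ α ∈ C, richardsonLHS η d g x α = 0) :
    ∑ α ∈ C, (x α - 2 * η k) * richardsonLHSOutside η d k C g x α
      + 4 * g * #C * d k + 2 * g * #C * (#C - 1) = 0 := by
  have hsum := sum_congr rfl fun α hα =>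
    sub_mul_richardsonLHS (d := d) (C := C) (g := g) (hxC α hα)
  rw [sum_eq_zero fun α hα => by rw [hR α hα, mul_zero], sum_add_distrib, sum_add_distrib,
    sum_const, nsmul_eq_mul, ← mul_sum] at hsum
  linear_combination -hsum - 2 * (g : ℂ) * two_mul_sum_sum_erase_sub_div_sub hx (2 * (η k : ℂ))

theorem tendsto_richardsonLHSOutside {γ : Type*} {l : Filter γ} {G : γ → ℝ}
    {X : γ → σ → ℂ} {g₀ : ℝ} {y : σ → ℂ} {α : σ} (hG : Tendsto G l (𝓝 g₀)) (hX : Tendsto X l (𝓝 y))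
    (hpole : ∀ j ≠ k, y α ≠ 2 * η j) (hpair : ∀ β ∉ C, y α ≠ y β) :
    Tendsto (fun t => richardsonLHSOutside η d k C (G t) (X t) α) l
      (𝓝 (richardsonLHSOutside η d k C g₀ y α)) := by
  have hg : Tendsto (fun t => (G t : ℂ)) l (𝓝 g₀) :=
    (Complex.continuous_ofReal.tendsto g₀).comp hG
  have hXi := tendsto_pi_nhds.1 hX
  exact (tendsto_const_nhds.sub ((tendsto_const_nhds.mul hg).mul (tendsto_finsetSum _ fun j hj =>
      tendsto_const_nhds.div (tendsto_const_nhds.sub (hXi α))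
        (sub_ne_zero.2 (hpole j (ne_of_mem_erase hj)).symm)))).add
    ((tendsto_const_nhds.mul hg).mul (tendsto_finsetSum _ fun β hβ =>
      tendsto_const_nhds.div ((hXi α).sub (hXi β)) (sub_ne_zero.2 (hpair β (mem_compl.1 hβ)))))

theorem tendsto_sum_sub_mul_richardsonLHSOutside {γ : Type*} {l : Filter γ} {G : γ → ℝ}
    {X : γ → σ → ℂ} {g₀ : ℝ} {y : σ → ℂ} (hη : ∀ j ≠ k, η j ≠ η k)
    (hG : Tendsto G l (𝓝 g₀)) (hX : Tendsto X l (𝓝 y)) (hyC : ∀ α ∈ C, y α = 2 * η k)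
    (hy : ∀ β ∉ C, y β ≠ 2 * η k) :
    Tendsto (fun t => ∑ α ∈ C, (X t α - 2 * η k) * richardsonLHSOutside η d k C (G t) (X t) α)
      l (𝓝 0) := by
  have hpole : ∀ α ∈ C, ∀ j ≠ k, y α ≠ 2 * η j := fun α hα j hj h =>
    hη j hj (by rw [hyC α hα] at h; exact_mod_cast (mul_left_cancel₀ two_ne_zero h).symm)
  have hpair : ∀ α ∈ C, ∀ β ∉ C, y α ≠ y β := fun α hα β hβ =>
    hyC α hα ▸ (hy β hβ).symm
  convert tendsto_finsetSum C fun α hα =>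
    ((tendsto_pi_nhds.1 hX α).sub_const (2 * (η k : ℂ))).mul
      (tendsto_richardsonLHSOutside (d := d) hG hX (hpole α hα) (hpair α hα)) using 2
  exact (sum_eq_zero fun α hα => by rw [hyC α hα, sub_self, zero_mul]).symm

end Richardson

theorem stmt_7_general
    (M L : ℕ)
    (η : Fin L → ℝ) (hη : Function.Injective η) (d : Fin L → ℝ)
    (k : Fin L) (C : Finset (Fin M)) (Mk : ℕ) (hMk : C.card = Mk) (hMk1 : 1 ≤ Mk)
    (gc : ℝ) (hgc : gc ≠ 0) (ε : ℝ) (hε : 0 < ε)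
    (e : ℝ → Fin M → ℂ)
    (hinj : ∀ g, g ≠ gc → |g - gc| < ε → Function.Injective (e g))
    (hed : ∀ g, g ≠ gc → |g - gc| < ε → ∀ α j, e g α ≠ 2 * (η j : ℂ))
    (hrich : ∀ g, g ≠ gc → |g - gc| < ε → ∀ α,
      (1 : ℂ) - 4 * g * ∑ j, (d j : ℂ) / (2 * (η j : ℂ) - e g α)
        + 4 * g * ∑ β ∈ univ.erase α, 1 / (e g α - e g β) = 0)
    (hlimC : ∀ α ∈ C, Tendsto (fun g => e g α) (𝓝[≠] gc) (𝓝 (2 * (η k : ℂ))))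
    (estar : Fin M → ℂ)
    (hlimnC : ∀ β, β ∉ C → Tendsto (fun g => e g β) (𝓝[≠] gc) (𝓝 (estar β)))
    (hstar_ne : ∀ β, β ∉ C → ∀ j, estar β ≠ 2 * (η j : ℂ)) :
    (Mk : ℝ) = 1 - 2 * d k := by
  subst hMk
  set y := C.piecewise (fun _ => 2 * (η k : ℂ)) estar
  have hy : Tendsto e (𝓝[≠] gc) (𝓝 y) := tendsto_pi_nhds.2 fun β => by
    by_cases hβ : β ∈ C
    · simpa [y, hβ] using hlimC β hβ
    · simpa [y, hβ] using hlimnC β hβ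
  have hrem := tendsto_sum_sub_mul_richardsonLHSOutside (η := η) (d := d) (G := fun g => g)
    (fun j hj => hη.ne hj) (tendsto_id.mono_left nhdsWithin_le_nhds) hy
    (fun α hα => C.piecewise_eq_of_mem _ _ hα)
    (fun β hβ => by simpa [y, hβ] using hstar_ne β hβ k)
  have hcoupling : Tendsto (fun g : ℝ => 4 * (g : ℂ) * #C * d k + 2 * g * #C * (#C - 1))
      (𝓝[≠] gc) (𝓝 0) := by
    refine (neg_zero (G := ℂ) ▸ hrem.neg).congr' ?_
    filter_upwards [self_mem_nhdsWithin,
      eventually_nhdsWithin_of_eventually_nhds (eventually_abs_sub_lt gc hε)] with g hne hlt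
    linear_combination -sum_sub_mul_richardsonLHSOutside_add_eq_zero (hinj g hne hlt).injOn
      (fun α _ => hed g hne hlt α k) (fun α _ => hrich g hne hlt α)
  have hlimitℂ : (4 * gc * #C * d k + 2 * gc * #C * (#C - 1) : ℂ) = 0 :=
    tendsto_nhds_unique ((by fun_prop : Continuous fun g : ℝ =>
      4 * (g : ℂ) * #C * d k + 2 * g * #C * (#C - 1)).continuousWithinAt) hcoupling
  have hlimit : 4 * gc * #C * d k + 2 * gc * #C * (#C - 1) = 0 := by exact_mod_cast hlimitℂ
  have hC : (#C : ℝ) ≠ 0 := Nat.cast_ne_zero.2 (by omega)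
  have hfactor : (2 * gc * #C) * (2 * d k + #C - 1) = 0 := by linear_combination hlimit
  linarith [(mul_eq_zero.1 hfactor).resolve_left (mul_ne_zero (mul_ne_zero two_ne_zero hgc) hC)]

/-- At a critical point `g_c`, the number `Mk` of pair energies that collapse onto
`2η k` satisfies the cluster condition `Mk = 1 - 2·d k`. -/
theorem stmt_7
    (M L : ℕ) (hM : 1 ≤ M) (hL : 1 ≤ L)
    (η : Fin L → ℝ) (hη : Function.Injective η) (d : Fin L → ℝ)
    (k : Fin L) (C : Finset (Fin M)) (Mk : ℕ) (hMk : C.card = Mk) (hMk1 : 1 ≤ Mk)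
    (gc : ℝ) (hgc : gc ≠ 0) (ε : ℝ) (hε : 0 < ε)
    (e : ℝ → Fin M → ℂ)
    (hinj : ∀ g, g ≠ gc → |g - gc| < ε → Function.Injective (e g))
    (hed : ∀ g, g ≠ gc → |g - gc| < ε → ∀ α j, e g α ≠ 2 * (η j : ℂ))
    (hrich : ∀ g, g ≠ gc → |g - gc| < ε → ∀ α,
      (1 : ℂ) - 4 * g * ∑ j, (d j : ℂ) / (2 * (η j : ℂ) - e g α)
        + 4 * g * ∑ β ∈ univ.erase α, 1 / (e g α - e g β) = 0)
    (hlimC : ∀ α ∈ C, Tendsto (fun g => e g α) (𝓝[≠] gc) (𝓝 (2 * (η k : ℂ))))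
    (estar : Fin M → ℂ)
    (hlimnC : ∀ β, β ∉ C → Tendsto (fun g => e g β) (𝓝[≠] gc) (𝓝 (estar β)))
    (hstar_inj : ∀ β γ, β ∉ C → γ ∉ C → β ≠ γ → estar β ≠ estar γ)
    (hstar_ne : ∀ β, β ∉ C → ∀ j, estar β ≠ 2 * (η j : ℂ)) :
    (Mk : ℝ) = 1 - 2 * d k :=
  stmt_7_general M L η hη d k C Mk hMk hMk1 gc hgc ε hε e hinj hed hrich hlimC estar hlimnC hstar_ne
end

section
/- At a critical point g_c, the limiting non-collapsing pair energies satisfy, for every α ∉ C: 1 − 4g_c·Σ_{j=1}^L d_j/(2η_j − e_α^*) + 4g_c·M_k/(e_α^* − 2η_k) + 4g_c·Σ_{β∉C, β≠α} 1/(e_α^* − e_β^*) = 0. -/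
/-!
Pass to the limit `g → g_c` in the Richardson equation of a non-collapsing pair energy `e_α`.
Split the pair sum over `β ≠ α` into the cluster `C` and the rest: each of the `M_k` cluster
terms tends to `1 / (e_α^* - 2η_k)`, the others to `1 / (e_α^* - e_β^*)`, and all limits are
finite because `e_α^*` stays away from `2η_j` and from the other `e_β^*`. The equation holds
on a punctured neighbourhood of `g_c`, so its limit vanishes.
-/

open Finset Filter Topology

theorem Finset.sum_erase_eq_sum_add_sum_compl_erase {ι M : Type*} [Fintype ι] [DecidableEq ι]
    [AddCommMonoid M] {C : Finset ι} {α : ι} (hα : α ∉ C) (f : ι → M) :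
    ∑ β ∈ univ.erase α, f β = ∑ β ∈ C, f β + ∑ β ∈ Cᶜ.erase α, f β := by
  rw [← sum_union (disjoint_left.mpr fun _ hβ hβ' => mem_compl.mp (mem_of_mem_erase hβ') hβ)]
  congr 1
  ext β
  by_cases hβ : β ∈ C
  · simp [hβ, ne_of_mem_of_not_mem hβ hα]
  · simp [hβ]

theorem tendsto_finset_sum_div {X ι 𝕜 : Type*} [NormedField 𝕜] {l : Filter X}
    {s : Finset ι} (c : ι → 𝕜) {u : ι → X → 𝕜} {v : ι → 𝕜}
    (hu : ∀ i ∈ s, Tendsto (u i) l (𝓝 (v i))) (hv : ∀ i ∈ s, v i ≠ 0) :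
    Tendsto (fun x => ∑ i ∈ s, c i / u i x) l (𝓝 (∑ i ∈ s, c i / v i)) :=
  tendsto_finsetSum s fun i hi => tendsto_const_nhds.div (hu i hi) (hv i hi)

theorem tendsto_sum_inv_sub_of_cluster {X ι : Type*} [Fintype ι] [DecidableEq ι]
    {l : Filter X} {e : X → ι → ℂ} {C : Finset ι} {z : ℂ} {estar : ι → ℂ} {α : ι}
    (hα : α ∉ C)
    (hC : ∀ β ∈ C, Tendsto (e · β) l (𝓝 z))
    (hnC : ∀ β ∉ C, Tendsto (e · β) l (𝓝 (estar β)))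
    (hz : estar α ≠ z) (hstar : ∀ β ∉ C, β ≠ α → estar α ≠ estar β) :
    Tendsto (fun x => ∑ β ∈ univ.erase α, 1 / (e x α - e x β)) l
      (𝓝 (C.card / (estar α - z) + ∑ β ∈ Cᶜ.erase α, 1 / (estar α - estar β))) := by
  have hα' := hnC α hα
  have hcluster : Tendsto (fun x => ∑ β ∈ C, 1 / (e x α - e x β)) l
      (𝓝 (C.card / (estar α - z))) := by
    simpa [div_eq_mul_inv] using
      tendsto_finset_sum_div (s := C) 1 (fun β hβ => hα'.sub (hC β hβ))
        fun _ _ => sub_ne_zero.mpr hz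
  have hrest : Tendsto (fun x => ∑ β ∈ Cᶜ.erase α, 1 / (e x α - e x β)) l
      (𝓝 (∑ β ∈ Cᶜ.erase α, 1 / (estar α - estar β))) := by
    refine tendsto_finset_sum_div 1 (fun β hβ => hα'.sub (hnC β ?_)) fun β hβ => ?_
    · exact mem_compl.mp (mem_of_mem_erase hβ)
    · exact sub_ne_zero.mpr <|
        hstar β (mem_compl.mp (mem_of_mem_erase hβ)) (ne_of_mem_erase hβ)
  simpa only [sum_erase_eq_sum_add_sum_compl_erase hα] using hcluster.add hrest

theorem eventually_nhdsNE_ne_and_abs_sub_lt {x ε : ℝ} (hε : 0 < ε) :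
    ∀ᶠ y in 𝓝[≠] x, y ≠ x ∧ |y - x| < ε := by
  refine eventually_mem_nhdsWithin.and (eventually_nhdsWithin_of_eventually_nhds ?_)
  filter_upwards [Metric.ball_mem_nhds x hε] with y hy
  rwa [Metric.mem_ball, Real.dist_eq] at hy

theorem stmt_10_general
    (M L : ℕ)
    (η : Fin L → ℝ) (d : Fin L → ℝ)
    (k : Fin L) (C : Finset (Fin M)) (Mk : ℕ) (hMk : C.card = Mk)
    (gc : ℝ) (ε : ℝ) (hε : 0 < ε)
    (e : ℝ → Fin M → ℂ)
    (hrich : ∀ g, g ≠ gc → |g - gc| < ε → ∀ α,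
      (1 : ℂ) - 4 * g * ∑ j, (d j : ℂ) / (2 * (η j : ℂ) - e g α)
        + 4 * g * ∑ β ∈ univ.erase α, 1 / (e g α - e g β) = 0)
    (hlimC : ∀ α ∈ C, Tendsto (fun g => e g α) (𝓝[≠] gc) (𝓝 (2 * (η k : ℂ))))
    (estar : Fin M → ℂ)
    (hlimnC : ∀ β, β ∉ C → Tendsto (fun g => e g β) (𝓝[≠] gc) (𝓝 (estar β)))
    (hstar_inj : ∀ β γ, β ∉ C → γ ∉ C → β ≠ γ → estar β ≠ estar γ)
    (hstar_ne : ∀ β, β ∉ C → ∀ j, estar β ≠ 2 * (η j : ℂ)) :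
    ∀ α, α ∉ C →
      (1 : ℂ) - 4 * gc * ∑ j, (d j : ℂ) / (2 * (η j : ℂ) - estar α)
        + 4 * gc * (Mk : ℂ) / (estar α - 2 * (η k : ℂ))
        + 4 * gc * ∑ β ∈ Cᶜ.erase α, 1 / (estar α - estar β) = 0 := by
  intro α hα
  have hcoupling : Tendsto (fun g : ℝ => 4 * (g : ℂ)) (𝓝[≠] gc) (𝓝 (4 * gc)) :=
    tendsto_const_nhds.mul (Complex.continuous_ofReal.continuousWithinAt (x := gc))
  have hlevels : Tendsto (fun g => ∑ j, (d j : ℂ) / (2 * (η j : ℂ) - e g α)) (𝓝[≠] gc)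
      (𝓝 (∑ j, (d j : ℂ) / (2 * (η j : ℂ) - estar α))) :=
    tendsto_finset_sum_div _ (fun _ _ => tendsto_const_nhds.sub (hlimnC α hα))
      fun j _ => sub_ne_zero.mpr (hstar_ne α hα j).symm
  have hpairs := tendsto_sum_inv_sub_of_cluster hα hlimC hlimnC (hstar_ne α hα k)
    fun β hβ hβα => hstar_inj α β hα hβ hβα.symm
  have hlim := ((tendsto_const_nhds (x := (1 : ℂ))).sub (hcoupling.mul hlevels)).add
    (hcoupling.mul hpairs)
  have hzero : ∀ᶠ g in 𝓝[≠] gc,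
      (1 : ℂ) - 4 * g * ∑ j, (d j : ℂ) / (2 * (η j : ℂ) - e g α)
        + 4 * g * ∑ β ∈ univ.erase α, 1 / (e g α - e g β) = 0 :=
    (eventually_nhdsNE_ne_and_abs_sub_lt hε).mono fun g hg => hrich g hg.1 hg.2 α
  have hvanish := tendsto_nhds_unique_of_eventuallyEq hlim tendsto_const_nhds hzero
  rw [← hMk]
  linear_combination hvanish

/-- At a critical point `g_c`, the limiting non-collapsing pair energies satisfy, for
every `α ∉ C`:
`1 - 4g_c·Σ_j d j/(2η j - e* α) + 4g_c·Mk/(e* α - 2η k)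
  + 4g_c·Σ_{β∉C, β≠α} 1/(e* α - e* β) = 0`. -/
theorem stmt_10
    (M L : ℕ) (hM : 1 ≤ M) (hL : 1 ≤ L)
    (η : Fin L → ℝ) (hη : Function.Injective η) (d : Fin L → ℝ)
    (k : Fin L) (C : Finset (Fin M)) (Mk : ℕ) (hMk : C.card = Mk) (hMk1 : 1 ≤ Mk)
    (gc : ℝ) (hgc : gc ≠ 0) (ε : ℝ) (hε : 0 < ε)
    (e : ℝ → Fin M → ℂ)
    (hinj : ∀ g, g ≠ gc → |g - gc| < ε → Function.Injective (e g))
    (hed : ∀ g, g ≠ gc → |g - gc| < ε → ∀ α j, e g α ≠ 2 * (η j : ℂ))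
    (hrich : ∀ g, g ≠ gc → |g - gc| < ε → ∀ α,
      (1 : ℂ) - 4 * g * ∑ j, (d j : ℂ) / (2 * (η j : ℂ) - e g α)
        + 4 * g * ∑ β ∈ univ.erase α, 1 / (e g α - e g β) = 0)
    (hlimC : ∀ α ∈ C, Tendsto (fun g => e g α) (𝓝[≠] gc) (𝓝 (2 * (η k : ℂ))))
    (estar : Fin M → ℂ)
    (hlimnC : ∀ β, β ∉ C → Tendsto (fun g => e g β) (𝓝[≠] gc) (𝓝 (estar β)))
    (hstar_inj : ∀ β γ, β ∉ C → γ ∉ C → β ≠ γ → estar β ≠ estar γ)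
    (hstar_ne : ∀ β, β ∉ C → ∀ j, estar β ≠ 2 * (η j : ℂ)) :
    ∀ α, α ∉ C →
      (1 : ℂ) - 4 * gc * ∑ j, (d j : ℂ) / (2 * (η j : ℂ) - estar α)
        + 4 * gc * (Mk : ℂ) / (estar α - 2 * (η k : ℂ))
        + 4 * gc * ∑ β ∈ Cᶜ.erase α, 1 / (estar α - estar β) = 0 :=
  stmt_10_general M L η d k C Mk hMk gc ε hε e hrich hlimC estar hlimnC hstar_inj hstar_ne
end

section
/- Assume in addition that M_k = 1 − 2d_k, that S_1(g) ≠ 0 for every g ≠ g_c in the interval, that the limits χ_p = lim_{g→g_c} S_p(g)/S_1(g) exist for 1 ≤ p ≤ M_k (so χ_1 = 1), and that (max_{γ∈C} |2η_k − e_γ(g)|)^{M_k} = O(|S_1(g)|) as g → g_c. Then the nonzero vector (χ_1, …, χ_{M_k}) satisfies the homogeneous linear system A·χ = 0, where A is the M_k × M_k matrix with entries A_{p,p} = 1 + 4g_c·P_0^*, A_{p,p−1} = −2g_c·(M_k + 1 − p) for 2 ≤ p ≤ M_k, A_{p,q} = 4g_c·P_{q−p}^* for q > p, and A_{p,q} =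 0 for q < p − 1. -/
open Finset Filter Topology

/-!
Write `x_α = 2η_k - e_α` for the pairons of the cluster. Multiplying the `α`-th Richardson
equation by `x_α ^ (p + 1)` and summing over the cluster, the interaction inside the cluster
symmetrises to `(p + 1) S_p - ∑_{m + n = p} S_m S_n`, while every other level `2η_j` and every
pairon outside the cluster is a pole away from `0`, expanded geometrically in `x_α` up to order
`M_k - p` with coefficients `P_n`. Since `1 - 2 d_k = M_k`, the `d_k`-term and the two terms
`S_0 S_p = M_k S_p` combine into the subdiagonal coefficient `-2g (M_k - p)`. Dividing by `S_1` and
letting `g → g_c`, the products `S_m S_n` with `m, n ≥ 1` vanish, the geometric remainder is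
`O(x ^ (M_k + 1)) = o(S_1)` by the growth hypothesis, and what is left is row `p + 1` of `A χ = 0`.
-/

def powerSum {ι K : Type*} [CommSemiring K] (s : Finset ι) (x : ι → K) (q : ℕ) : K :=
  ∑ α ∈ s, x α ^ q

section Algebra

variable {ι κ K : Type*} [Field K]

theorem pow_mul_div_sub_eq_sum_add {b x : K} (hb : b ≠ 0) (hbx : b ≠ x) (w : K) (p N : ℕ) :
    x ^ p * (w / (b - x)) =
      ∑ n ∈ range N, w / b ^ (n + 1) * x ^ (p + n) + x ^ (p + N) * (w / (b ^ N * (b - x))) := by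
  have hbx' : b - x ≠ 0 := sub_ne_zero.mpr hbx
  induction N with
  | zero => simp
  | succ N ih =>
    rw [ih, sum_range_succ, add_assoc]
    congr 1
    field_simp
    ring

theorem sum_pow_mul_sum_div_sub_eq_sum_add (s : Finset ι) (t : Finset κ) (x : ι → K)
    (w b : κ → K) (hb : ∀ i ∈ t, b i ≠ 0) (hbx : ∀ α ∈ s, ∀ i ∈ t, b i ≠ x α) (p N : ℕ) :
    ∑ α ∈ s, x α ^ p * ∑ i ∈ t, w i / (b i - x α) =
      ∑ n ∈ range N, (∑ i ∈ t, w i / b i ^ (n + 1)) * powerSum s x (p + n) +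
        ∑ α ∈ s, x α ^ (p + N) * ∑ i ∈ t, w i / (b i ^ N * (b i - x α)) := by
  have hexp : ∀ α ∈ s, x α ^ p * ∑ i ∈ t, w i / (b i - x α) =
      ∑ i ∈ t, ∑ n ∈ range N, w i / b i ^ (n + 1) * x α ^ (p + n) +
        x α ^ (p + N) * ∑ i ∈ t, w i / (b i ^ N * (b i - x α)) := by
    intro α hα
    simp only [mul_sum, ← sum_add_distrib]
    exact sum_congr rfl fun i hi => pow_mul_div_sub_eq_sum_add (hb i hi) (hbx α hα i hi) _ _ _
  rw [sum_congr rfl hexp, sum_add_distrib]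
  congr 1
  simp only [powerSum, sum_mul, mul_sum]
  exact (sum_congr rfl fun _ _ => sum_comm).trans sum_comm

theorem pow_succ_div_sub_add_pow_succ_div_sub {x y : K} (h : x ≠ y) (p : ℕ) :
    x ^ (p + 1) / (y - x) + y ^ (p + 1) / (x - y) =
      -∑ q ∈ antidiagonal p, x ^ q.1 * y ^ q.2 := by
  have hxy : x - y ≠ 0 := sub_ne_zero.mpr h
  have hyx : y - x ≠ 0 := sub_ne_zero.mpr h.symm
  have hgeom := geom_sum₂_mul x y (p + 1)
  rw [Nat.sum_antidiagonal_eq_sum_range_succ_mk]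
  simp only [Nat.add_sub_cancel] at hgeom
  field_simp
  linear_combination (y - x) * hgeom

-- The diagonal terms `β = α` on the left are `x / 0 = 0`.
theorem two_mul_sum_sum_pow_succ_div_sub {s : Finset ι} {x : ι → K} (hx : Set.InjOn x s)
    (p : ℕ) :
    2 * ∑ α ∈ s, ∑ β ∈ s, x α ^ (p + 1) / (x β - x α) =
      (p + 1) * powerSum s x p -
        ∑ q ∈ antidiagonal p, powerSum s x q.1 * powerSum s x q.2 := by
  classical
  have hpair : ∀ α ∈ s, ∀ β ∈ s,
      x α ^ (p + 1) / (x β - x α) + x β ^ (p + 1) / (x α - x β) =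
        (if α = β then (p + 1) * x α ^ p else 0) - ∑ q ∈ antidiagonal p, x α ^ q.1 * x β ^ q.2 := by
    intro α hα β hβ
    by_cases hαβ : α = β
    · subst hαβ
      have : ∀ q ∈ antidiagonal p, x α ^ q.1 * x α ^ q.2 = x α ^ p := fun q hq => by
        rw [← pow_add, mem_antidiagonal.mp hq]
      rw [sum_congr rfl this]
      simp
    · rw [if_neg hαβ, zero_sub]
      exact pow_succ_div_sub_add_pow_succ_div_sub (fun h => hαβ (hx hα hβ h)) p
  calc 2 * ∑ α ∈ s, ∑ β ∈ s, x α ^ (p + 1) / (x β - x α)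
      = ∑ α ∈ s, ∑ β ∈ s, (x α ^ (p + 1) / (x β - x α) + x β ^ (p + 1) / (x α - x β)) := by
        rw [two_mul]
        nth_rewrite 2 [sum_comm]
        simp only [← sum_add_distrib]
    _ = _ := by
        rw [sum_congr rfl fun α hα => sum_congr rfl (hpair α hα)]
        simp only [sum_sub_distrib, sum_ite_eq, powerSum, sum_mul_sum]
        rw [sum_congr rfl fun α hα => if_pos hα, mul_sum]
        congr 1
        exact (sum_congr rfl fun _ _ => sum_comm).trans sum_comm

theorem moment_identity {s : Finset ι} {t : Finset κ} {x : ι → K} {w b : κ → K} {g δ : K}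
    (hx : ∀ α ∈ s, x α ≠ 0) (hinj : Set.InjOn x s) (hb : ∀ i ∈ t, b i ≠ 0)
    (hbx : ∀ α ∈ s, ∀ i ∈ t, b i ≠ x α)
    (heq : ∀ α ∈ s, 1 - 4 * g * (δ / x α) + 4 * g * ∑ i ∈ t, w i / (b i - x α)
      + 4 * g * ∑ β ∈ s, 1 / (x β - x α) = 0) (p N : ℕ) :
    powerSum s x (p + 1) - 4 * g * δ * powerSum s x p
      + 2 * g * ((p + 1) * powerSum s x p -
        ∑ q ∈ antidiagonal p, powerSum s x q.1 * powerSum s x q.2)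
      + 4 * g * ∑ n ∈ range N, (∑ i ∈ t, w i / b i ^ (n + 1)) * powerSum s x (p + 1 + n)
      + 4 * g * ∑ α ∈ s, x α ^ (p + 1 + N) * ∑ i ∈ t, w i / (b i ^ N * (b i - x α)) = 0 := by
  have hsum : ∑ α ∈ s, x α ^ (p + 1) * (1 - 4 * g * (δ / x α)
      + 4 * g * ∑ i ∈ t, w i / (b i - x α) + 4 * g * ∑ β ∈ s, 1 / (x β - x α)) = 0 :=
    sum_eq_zero fun α hα => by rw [heq α hα, mul_zero]
  have hsplit : ∑ α ∈ s, x α ^ (p + 1) * (1 - 4 * g * (δ / x α)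
      + 4 * g * ∑ i ∈ t, w i / (b i - x α) + 4 * g * ∑ β ∈ s, 1 / (x β - x α)) =
      powerSum s x (p + 1) - 4 * g * δ * powerSum s x p
        + 4 * g * ∑ α ∈ s, x α ^ (p + 1) * ∑ i ∈ t, w i / (b i - x α)
        + 4 * g * ∑ α ∈ s, ∑ β ∈ s, x α ^ (p + 1) / (x β - x α) := by
    have hα : ∀ α ∈ s, x α ^ (p + 1) * (1 - 4 * g * (δ / x α)
        + 4 * g * ∑ i ∈ t, w i / (b i - x α) + 4 * g * ∑ β ∈ s, 1 / (x β - x α)) =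
        x α ^ (p + 1) - 4 * g * δ * x α ^ p
          + 4 * g * (x α ^ (p + 1) * ∑ i ∈ t, w i / (b i - x α))
          + 4 * g * ∑ β ∈ s, x α ^ (p + 1) / (x β - x α) := by
      intro α hα
      have hδ : x α ^ (p + 1) * (δ / x α) = δ * x α ^ p := by
        rw [pow_succ]; field_simp [hx α hα]
      have hB : x α ^ (p + 1) * ∑ β ∈ s, 1 / (x β - x α) =
          ∑ β ∈ s, x α ^ (p + 1) / (x β - x α) := by
        simp only [mul_sum, mul_one_div]
      linear_combination -4 * g * hδ + 4 * g * hB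
    rw [sum_congr rfl hα]
    simp only [sum_add_distrib, sum_sub_distrib, ← mul_sum, powerSum]
  have hX := sum_pow_mul_sum_div_sub_eq_sum_add s t x w b hb hbx (p + 1) N
  have hY := two_mul_sum_sum_pow_succ_div_sub hinj p
  linear_combination hsum - hsplit - 4 * g * hX - 2 * g * hY

end Algebra

section Limits

variable {X : Type*} {l : Filter X}

theorem tendsto_powerSum_of_tendsto_zero {ι : Type*} {s : Finset ι} {x : X → ι → ℂ}
    (hx : ∀ α ∈ s, Tendsto (x · α) l (𝓝 0)) (n : ℕ) :
    Tendsto (fun g => powerSum s (x g) n) l (𝓝 (s.card * 0 ^ n)) := by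
  have := tendsto_finsetSum s fun α hα => (hx α hα).pow n
  simpa [powerSum] using this

theorem tendsto_sum_pow_succ_mul_div_of_isBigO {𝕜 ι : Type*} [NormedField 𝕜] {s : Finset ι}
    {x H : X → ι → 𝕜} {h : ι → 𝕜} {v : X → 𝕜} {m : ℕ}
    (hx : ∀ α ∈ s, Tendsto (x · α) l (𝓝 0)) (hH : ∀ α ∈ s, Tendsto (H · α) l (𝓝 (h α)))
    (hO : ∀ α ∈ s, (fun g => x g α ^ m) =O[l] v) :
    Tendsto (fun g => (∑ α ∈ s, x g α ^ (m + 1) * H g α) / v g) l (𝓝 0) := by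
  refine Asymptotics.IsLittleO.tendsto_div_nhds_zero ?_
  have hterm : ∀ α ∈ s, (fun g => x g α ^ (m + 1) * H g α) =o[l] v := fun α hα => by
    have hsmall : (fun g => x g α * H g α) =o[l] fun _ => (1 : 𝕜) := by
      rw [Asymptotics.isLittleO_one_iff]
      simpa using (hx α hα).mul (hH α hα)
    simpa [pow_succ, mul_comm, mul_left_comm, mul_assoc] using hsmall.mul_isBigO (hO α hα)
  exact Asymptotics.IsLittleO.fun_sum hterm

theorem isBigO_pow_sup'_norm {ι 𝕜 : Type*} [NormedField 𝕜] {s : Finset ι} (hs : s.Nonempty)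
    {x : X → ι → 𝕜} {α : ι} (hα : α ∈ s) (m : ℕ) :
    (fun g => x g α ^ m) =O[l] fun g => (s.sup' hs fun γ => ‖x g γ‖) ^ m := by
  refine Asymptotics.isBigO_of_le _ fun g => ?_
  have hle : ‖x g α‖ ≤ s.sup' hs fun γ => ‖x g γ‖ := le_sup' (fun γ => ‖x g γ‖) hα
  rw [norm_pow, norm_pow, Real.norm_of_nonneg ((norm_nonneg _).trans hle)]
  exact pow_le_pow_left₀ (norm_nonneg _) hle m

theorem tendsto_sum_div_pow {κ : Type*} {t : Finset κ} {w : κ → ℂ} {b : X → κ → ℂ}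
    {bstar : κ → ℂ} (hb : ∀ i ∈ t, Tendsto (b · i) l (𝓝 (bstar i))) (hb0 : ∀ i ∈ t, bstar i ≠ 0)
    (n : ℕ) : Tendsto (fun g => ∑ i ∈ t, w i / b g i ^ n) l (𝓝 (∑ i ∈ t, w i / bstar i ^ n)) :=
  tendsto_finsetSum t fun i hi =>
    tendsto_const_nhds.div ((hb i hi).pow n) (pow_ne_zero _ (hb0 i hi))

theorem tendsto_sum_pow_succ_mul_sum_div_div_of_isBigO {ι κ : Type*} {s : Finset ι}
    (hs : s.Nonempty) {t : Finset κ} {x : X → ι → ℂ} {w : κ → ℂ} {b : X → κ → ℂ}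
    {bstar : κ → ℂ} {v : X → ℂ} {m N : ℕ} (hx : ∀ α ∈ s, Tendsto (x · α) l (𝓝 0))
    (hb : ∀ i ∈ t, Tendsto (b · i) l (𝓝 (bstar i))) (hb0 : ∀ i ∈ t, bstar i ≠ 0)
    (hO : (fun g => (s.sup' hs fun γ => ‖x g γ‖) ^ m) =O[l] v) :
    Tendsto (fun g => (∑ α ∈ s, x g α ^ (m + 1) *
      ∑ i ∈ t, w i / (b g i ^ N * (b g i - x g α))) / v g) l (𝓝 0) :=
  tendsto_sum_pow_succ_mul_div_of_isBigO hx
    (fun α hα => tendsto_finsetSum t fun i hi =>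
      tendsto_const_nhds.div (((hb i hi).pow N).mul ((hb i hi).sub (hx α hα)))
        (by rw [sub_zero, ← pow_succ]; exact pow_ne_zero _ (hb0 i hi)))
    fun α hα => (isBigO_pow_sup'_norm hs hα m).trans hO

variable {S : X → ℕ → ℂ} {χ : ℕ → ℂ} {Mk : ℕ}

theorem tendsto_sum_antidiagonal_succ_div (hS0 : ∀ g, S g 0 = Mk)
    (hS : ∀ n, Tendsto (S · n) l (𝓝 (Mk * 0 ^ n)))
    (hχ : ∀ p, 1 ≤ p → p ≤ Mk → Tendsto (fun g => S g p / S g 1) l (𝓝 (χ p)))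
    {j : ℕ} (hj : j + 1 ≤ Mk) :
    Tendsto (fun g => (∑ q ∈ antidiagonal (j + 1), S g q.1 * S g q.2) / S g 1) l
      (𝓝 (2 * Mk * χ (j + 1))) := by
  have hsplit : ∀ g, (∑ q ∈ antidiagonal (j + 1), S g q.1 * S g q.2) / S g 1 =
      Mk * (S g (j + 1) / S g 1) + ∑ q ∈ antidiagonal j, S g (q.1 + 1) / S g 1 * S g q.2 := by
    intro g
    rw [Nat.sum_antidiagonal_succ, hS0, add_div, sum_div, mul_div_assoc]
    simp only [div_mul_eq_mul_div]
  have htail : Tendsto (fun g => ∑ q ∈ antidiagonal j, S g (q.1 + 1) / S g 1 * S g q.2) l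
      (𝓝 (∑ q ∈ antidiagonal j, χ (q.1 + 1) * (Mk * 0 ^ q.2))) :=
    tendsto_finsetSum _ fun q hq =>
      (hχ _ le_add_self (by have := mem_antidiagonal.mp hq; omega)).mul (hS q.2)
  have htail_eq : ∑ q ∈ antidiagonal j, χ (q.1 + 1) * (Mk * 0 ^ q.2) = Mk * χ (j + 1) := by
    rw [sum_eq_single (j, 0)]
    · simp [mul_comm]
    · intro q hq hne
      have hq2 : q.2 ≠ 0 := fun h => hne (Prod.ext (by have := mem_antidiagonal.mp hq; omega) h)
      simp [zero_pow hq2]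
    · simp
  rw [show (2 * Mk * χ (j + 1) : ℂ) = Mk * χ (j + 1) + ∑ q ∈ antidiagonal j,
    χ (q.1 + 1) * (Mk * 0 ^ q.2) by rw [htail_eq]; ring]
  simpa only [hsplit] using ((hχ (j + 1) le_add_self hj).const_mul (Mk : ℂ)).add htail

theorem tendsto_cluster_interaction_div {G : X → ℂ} {c δ : ℂ} (hG : Tendsto G l (𝓝 c))
    (hδ : (Mk : ℂ) = 1 - 2 * δ) (hS0 : ∀ g, S g 0 = Mk)
    (hS : ∀ n, Tendsto (S · n) l (𝓝 (Mk * 0 ^ n)))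
    (hχ : ∀ p, 1 ≤ p → p ≤ Mk → Tendsto (fun g => S g p / S g 1) l (𝓝 (χ p)))
    {i : ℕ} (hi : i < Mk) :
    Tendsto (fun g => (-(4 * G g * δ * S g i) + 2 * G g * ((i + 1) * S g i -
        ∑ q ∈ antidiagonal i, S g q.1 * S g q.2)) / S g 1) l
      (𝓝 (-if i = 0 then 0 else 2 * c * (Mk - i) * χ i)) := by
  rcases i with _ | j
  -- `S_0 / S_1` has no limit, but for `i = 0` the numerator vanishes since `S_0 = Mk = 1 - 2δ`.
  · have hzero : ∀ g, -(4 * G g * δ * S g 0) + 2 * G g * ((((0 : ℕ) : ℂ) + 1) * S g 0 -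
        ∑ q ∈ antidiagonal 0, S g q.1 * S g q.2) = 0 := fun g => by
      simp only [Nat.antidiagonal_zero, sum_singleton, hS0]
      linear_combination (-2 * G g * Mk) * hδ
    simp only [hzero, zero_div]
    simpa using tendsto_const_nhds
  · have hsplit : ∀ g, (-(4 * G g * δ * S g (j + 1)) + 2 * G g * ((((j + 1 : ℕ) : ℂ) + 1) *
        S g (j + 1) - ∑ q ∈ antidiagonal (j + 1), S g q.1 * S g q.2)) / S g 1 =
        2 * G g * ((j + 2 - 2 * δ) * (S g (j + 1) / S g 1) -
          (∑ q ∈ antidiagonal (j + 1), S g q.1 * S g q.2) / S g 1) := fun g => by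
      push_cast
      ring
    have hlim := (hG.const_mul 2).mul (((hχ (j + 1) le_add_self hi.le).const_mul
      ((j : ℂ) + 2 - 2 * δ)).sub (tendsto_sum_antidiagonal_succ_div hS0 hS hχ hi.le))
    simp only [← hsplit] at hlim
    convert hlim using 2
    push_cast
    linear_combination (2 * c * χ (j + 1)) * hδ

theorem row_eq_zero_of_moment_identity [l.NeBot] {G : X → ℂ} {c δ : ℂ} {P : X → ℕ → ℂ}
    {Pstar : ℕ → ℂ} {R : X → ℂ} (hG : Tendsto G l (𝓝 c)) (hδ : (Mk : ℂ) = 1 - 2 * δ)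
    (hS0 : ∀ g, S g 0 = Mk) (hS : ∀ n, Tendsto (S · n) l (𝓝 (Mk * 0 ^ n)))
    (hχ : ∀ p, 1 ≤ p → p ≤ Mk → Tendsto (fun g => S g p / S g 1) l (𝓝 (χ p)))
    (hP : ∀ n, Tendsto (P · n) l (𝓝 (Pstar n)))
    (hR : Tendsto (fun g => R g / S g 1) l (𝓝 0)) {i : ℕ} (hi : i < Mk)
    (hmoment : ∀ᶠ g in l, S g (i + 1) - 4 * G g * δ * S g i
      + 2 * G g * ((i + 1) * S g i - ∑ q ∈ antidiagonal i, S g q.1 * S g q.2)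
      + 4 * G g * ∑ n ∈ range (Mk - i), P g n * S g (i + 1 + n) + 4 * G g * R g = 0) :
    χ (i + 1) - (if i = 0 then 0 else 2 * c * (Mk - i) * χ i)
      + ∑ n ∈ range (Mk - i), 4 * c * Pstar n * χ (i + 1 + n) = 0 := by
  set E : X → ℂ := fun g => S g (i + 1) - 4 * G g * δ * S g i
      + 2 * G g * ((i + 1) * S g i - ∑ q ∈ antidiagonal i, S g q.1 * S g q.2)
      + 4 * G g * ∑ n ∈ range (Mk - i), P g n * S g (i + 1 + n) + 4 * G g * R g with hE
  have hsplit : ∀ g, E g / S g 1 = S g (i + 1) / S g 1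
      + (-(4 * G g * δ * S g i) + 2 * G g * ((i + 1) * S g i -
          ∑ q ∈ antidiagonal i, S g q.1 * S g q.2)) / S g 1
      + 4 * G g * ∑ n ∈ range (Mk - i), P g n * (S g (i + 1 + n) / S g 1)
      + 4 * G g * (R g / S g 1) := fun g => by
    simp only [hE, ← mul_div_assoc, ← sum_div]
    ring
  have hlim : Tendsto (fun g => E g / S g 1) l
      (𝓝 (χ (i + 1) + (-if i = 0 then 0 else 2 * c * (Mk - i) * χ i)
        + 4 * c * ∑ n ∈ range (Mk - i), Pstar n * χ (i + 1 + n) + 4 * c * 0)) := by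
    simp only [hsplit]
    refine (((hχ (i + 1) le_add_self hi).add
      (tendsto_cluster_interaction_div hG hδ hS0 hS hχ hi)).add
      ((hG.const_mul 4).mul (tendsto_finsetSum _ fun n hn => (hP n).mul (hχ _ ?_ ?_)))).add
      ((hG.const_mul 4).mul hR)
    · omega
    · have := mem_range.mp hn; omega
  have hzero : Tendsto (fun g => E g / S g 1) l (𝓝 0) :=
    tendsto_const_nhds.congr' (hmoment.mono fun g hg => by simp only [hE, hg, zero_div])
  have := tendsto_nhds_unique hlim hzero
  simp only [mul_sum, mul_assoc] at this ⊢
  linear_combination this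

end Limits

section Richardson

variable {Λ μ : Type*}

def clusterCoord (η : Λ → ℝ) (k : Λ) (e : μ → ℂ) : μ → ℂ := fun α => 2 * (η k : ℂ) - e α

/- In the coordinate `x = 2η_k - e` of the cluster, the level `2η_j` (`j ≠ k`) and the pairon
`e_β` (`β ∉ C`) become poles `clusterPole (.inl j)`, `clusterPole (.inr β)` of weights `d_j`, `1`. -/
def clusterWeight (d : Λ → ℝ) : Λ ⊕ μ → ℂ := Sum.elim (fun j => (d j : ℂ)) 1

def clusterPole (η : Λ → ℝ) (k : Λ) (e : μ → ℂ) : Λ ⊕ μ → ℂ :=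
  Sum.elim (fun j => 2 * (η k : ℂ) - 2 * (η j : ℂ)) (clusterCoord η k e)

theorem tendsto_clusterPole {X : Type*} {l : Filter X} {η : Λ → ℝ} {k : Λ} {e : X → μ → ℂ}
    {estar : μ → ℂ} {s : Finset Λ} {t : Finset μ} (he : ∀ β ∈ t, Tendsto (e · β) l (𝓝 (estar β))) :
    ∀ i ∈ s.disjSum t, Tendsto (fun g => clusterPole η k (e g) i) l (𝓝 (clusterPole η k estar i))
  | .inl _, _ => tendsto_const_nhds
  | .inr β, hi => tendsto_const_nhds.sub (he β (inr_mem_disjSum.mp hi))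

variable [Fintype Λ] [DecidableEq Λ] [Fintype μ] [DecidableEq μ]

theorem richardson_eq_cluster_form {η d : Λ → ℝ} {k : Λ} {C : Finset μ} {e : μ → ℂ} {g : ℂ}
    {α : μ} (h : 1 - 4 * g * ∑ j, (d j : ℂ) / (2 * (η j : ℂ) - e α)
        + 4 * g * ∑ β ∈ univ.erase α, 1 / (e α - e β) = 0) :
    1 - 4 * g * ((d k : ℂ) / clusterCoord η k e α)
      + 4 * g * ∑ i ∈ (univ.erase k).disjSum Cᶜ,
          clusterWeight d i / (clusterPole η k e i - clusterCoord η k e α)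
      + 4 * g * ∑ β ∈ C, 1 / (clusterCoord η k e β - clusterCoord η k e α) = 0 := by
  have hlevels : ∑ j, (d j : ℂ) / (2 * (η j : ℂ) - e α) =
      (d k : ℂ) / clusterCoord η k e α - ∑ j ∈ univ.erase k,
        (d j : ℂ) / ((2 * (η k : ℂ) - 2 * (η j : ℂ)) - clusterCoord η k e α) := by
    rw [← add_sum_erase _ _ (mem_univ k), sub_eq_add_neg _ (Finset.sum _ _), ← sum_neg_distrib]
    congr 1
    refine sum_congr rfl fun j _ => ?_
    rw [← div_neg, clusterCoord]
    ring_nf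
  have hpairons : ∑ β ∈ univ.erase α, 1 / (e α - e β) =
      ∑ β ∈ C, 1 / (clusterCoord η k e β - clusterCoord η k e α) +
        ∑ β ∈ Cᶜ, 1 / (clusterCoord η k e β - clusterCoord η k e α) := by
    rw [sum_erase _ (by simp), sum_add_sum_compl C]
    simp only [clusterCoord, sub_sub_sub_cancel_left]
  rw [hlevels, hpairons] at h
  simp only [sum_disjSum, clusterWeight, clusterPole, Sum.elim_inl, Sum.elim_inr, Pi.one_apply]
  linear_combination h

theorem clusterPole_ne_zero {η : Λ → ℝ} (hη : Function.Injective η) {k : Λ} {C : Finset μ}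
    {e : μ → ℂ} (he : ∀ β ∉ C, e β ≠ 2 * (η k : ℂ)) :
    ∀ i ∈ (univ.erase k).disjSum Cᶜ, clusterPole η k e i ≠ 0
  | .inl j, hi => by
    rw [inl_mem_disjSum, mem_erase] at hi
    simpa [clusterPole, sub_eq_zero] using hη.ne (Ne.symm hi.1)
  | .inr β, hi => by
    rw [inr_mem_disjSum, mem_compl] at hi
    simpa [clusterPole, clusterCoord, sub_eq_zero] using (he β hi).symm

theorem richardson_moment_identity {η d : Λ → ℝ} (hη : Function.Injective η) {k : Λ}
    {C : Finset μ} {e : μ → ℂ} (he : Function.Injective e) (hed : ∀ α j, e α ≠ 2 * (η j : ℂ))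
    {g : ℂ} (hrich : ∀ α, 1 - 4 * g * ∑ j, (d j : ℂ) / (2 * (η j : ℂ) - e α)
        + 4 * g * ∑ β ∈ univ.erase α, 1 / (e α - e β) = 0) (p N : ℕ) :
    powerSum C (clusterCoord η k e) (p + 1) - 4 * g * d k * powerSum C (clusterCoord η k e) p
      + 2 * g * ((p + 1) * powerSum C (clusterCoord η k e) p - ∑ q ∈ antidiagonal p,
        powerSum C (clusterCoord η k e) q.1 * powerSum C (clusterCoord η k e) q.2)
      + 4 * g * ∑ n ∈ range N, (∑ i ∈ (univ.erase k).disjSum Cᶜ,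
          clusterWeight d i / clusterPole η k e i ^ (n + 1)) *
            powerSum C (clusterCoord η k e) (p + 1 + n)
      + 4 * g * ∑ α ∈ C, clusterCoord η k e α ^ (p + 1 + N) *
          ∑ i ∈ (univ.erase k).disjSum Cᶜ, clusterWeight d i /
            (clusterPole η k e i ^ N * (clusterPole η k e i - clusterCoord η k e α)) = 0 := by
  have hcoord : ∀ α j, clusterCoord η k e α ≠ 2 * (η k : ℂ) - 2 * (η j : ℂ) := fun α j h =>
    hed α j (by simpa [clusterCoord] using h)
  refine moment_identity (x := clusterCoord η k e) (w := clusterWeight d)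
    (b := clusterPole η k e) (δ := d k)
    (fun α _ h => hed α k (sub_eq_zero.mp h).symm)
    (fun α _ β _ h => he (by simpa [clusterCoord] using h))
    (clusterPole_ne_zero hη fun β _ => hed β k) ?_
    (fun α _ => richardson_eq_cluster_form (hrich α)) p N
  rintro α hα (j | β) hi
  · exact (hcoord α j).symm
  · rw [inr_mem_disjSum, mem_compl] at hi
    simpa [clusterPole, clusterCoord] using he.ne (ne_of_mem_of_not_mem hα hi).symm

end Richardson

theorem mulVec_eq_zero_of_row_eq_zero {Mk : ℕ} {c : ℂ} {Pstar χ : ℕ → ℂ}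
    (hrow : ∀ i < Mk, χ (i + 1) - (if i = 0 then 0 else 2 * c * (Mk - i) * χ i)
      + ∑ n ∈ range (Mk - i), 4 * c * Pstar n * χ (i + 1 + n) = 0) :
    (Matrix.of fun i j : Fin Mk =>
        if (j : ℕ) = (i : ℕ) then (1 : ℂ) + 4 * c * Pstar 0
        else if (j : ℕ) + 1 = (i : ℕ) then -2 * c * ((Mk : ℂ) - ((i : ℕ) : ℂ))
        else if (i : ℕ) < (j : ℕ) then 4 * c * Pstar ((j : ℕ) - (i : ℕ))
        else 0).mulVec (fun i : Fin Mk => χ ((i : ℕ) + 1)) = 0 := by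
  ext ⟨i, hi⟩
  have hentry : ∀ j, (if j = i then (1 : ℂ) + 4 * c * Pstar 0
        else if j + 1 = i then -2 * c * ((Mk : ℂ) - (i : ℂ))
        else if i < j then 4 * c * Pstar (j - i) else 0) * χ (j + 1) =
      (if j = i then χ (i + 1) else 0) - (if j + 1 = i then 2 * c * (Mk - i) * χ i else 0)
        + (if i ≤ j then 4 * c * Pstar (j - i) * χ (j + 1) else 0) := fun j => by
    split_ifs <;> first | omega | (subst_vars; push_cast [Nat.sub_self]; ring)
  simp only [Matrix.mulVec, dotProduct, Matrix.of_apply, Pi.zero_apply]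
  rw [Fin.sum_univ_eq_sum_range (fun j => (if j = i then (1 : ℂ) + 4 * c * Pstar 0
        else if j + 1 = i then -2 * c * ((Mk : ℂ) - (i : ℂ))
        else if i < j then 4 * c * Pstar (j - i) else 0) * χ (j + 1)) Mk]
  have hbelow : ∑ j ∈ range Mk, (if j + 1 = i then 2 * c * (Mk - i) * χ i else 0) =
      if i = 0 then 0 else 2 * c * (Mk - i) * χ i := by
    rcases i with _ | i
    · simp
    · simp only [Nat.add_right_cancel_iff, sum_ite_eq', mem_range, Nat.add_one_ne_zero,
        if_false, if_pos (Nat.lt_of_succ_lt hi)]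
  have habove : ∑ j ∈ range Mk, (if i ≤ j then 4 * c * Pstar (j - i) * χ (j + 1) else 0) =
      ∑ n ∈ range (Mk - i), 4 * c * Pstar n * χ (i + 1 + n) := by
    rw [← sum_filter, show (range Mk).filter (i ≤ ·) = Ico i Mk by ext; simp; omega,
      sum_Ico_eq_sum_range]
    refine sum_congr rfl fun n _ => ?_
    rw [Nat.add_sub_cancel_left, add_right_comm]
  rw [sum_congr rfl fun j _ => hentry j, sum_add_distrib, sum_sub_distrib, sum_ite_eq',
    if_pos (mem_range.2 hi), hbelow, habove]
  exact hrow i hi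

theorem stmt_11_general
    (M L : ℕ)
    (η : Fin L → ℝ) (hη : Function.Injective η) (d : Fin L → ℝ)
    (k : Fin L) (C : Finset (Fin M)) (Mk : ℕ) (hMk : C.card = Mk) (hMk1 : 1 ≤ Mk)
    (hCne : C.Nonempty)
    (gc : ℝ) (ε : ℝ) (hε : 0 < ε)
    (e : ℝ → Fin M → ℂ)
    (hinj : ∀ g, g ≠ gc → |g - gc| < ε → Function.Injective (e g))
    (hed : ∀ g, g ≠ gc → |g - gc| < ε → ∀ α j, e g α ≠ 2 * (η j : ℂ))
    (hrich : ∀ g, g ≠ gc → |g - gc| < ε → ∀ α,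
      (1 : ℂ) - 4 * g * ∑ j, (d j : ℂ) / (2 * (η j : ℂ) - e g α)
        + 4 * g * ∑ β ∈ univ.erase α, 1 / (e g α - e g β) = 0)
    (hlimC : ∀ α ∈ C, Tendsto (fun g => e g α) (𝓝[≠] gc) (𝓝 (2 * (η k : ℂ))))
    (estar : Fin M → ℂ)
    (hlimnC : ∀ β, β ∉ C → Tendsto (fun g => e g β) (𝓝[≠] gc) (𝓝 (estar β)))
    (hstar_ne : ∀ β, β ∉ C → ∀ j, estar β ≠ 2 * (η j : ℂ))
    (S : ℝ → ℕ → ℂ)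
    (hS : ∀ g q, S g q = ∑ α ∈ C, (2 * (η k : ℂ) - e g α) ^ q)
    (Pstar : ℕ → ℂ)
    (hPstar : ∀ n, Pstar n =
        ∑ j ∈ univ.erase k, (d j : ℂ) / (2 * (η k : ℂ) - 2 * (η j : ℂ)) ^ (n + 1)
        + ∑ β ∈ Cᶜ, 1 / (2 * (η k : ℂ) - estar β) ^ (n + 1))
    (hcluster : (Mk : ℝ) = 1 - 2 * d k)
    (χ : ℕ → ℂ)
    (hχ : ∀ p, 1 ≤ p → p ≤ Mk →
      Tendsto (fun g => S g p / S g 1) (𝓝[≠] gc) (𝓝 (χ p)))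
    (hχ1 : χ 1 = 1)
    (hbigO : (fun g => (C.sup' hCne fun γ => ‖2 * (η k : ℂ) - e g γ‖) ^ Mk)
        =O[𝓝[≠] gc] fun g => S g 1) :
    (Matrix.of fun i j : Fin Mk =>
        if (j : ℕ) = (i : ℕ) then (1 : ℂ) + 4 * gc * Pstar 0
        else if (j : ℕ) + 1 = (i : ℕ) then -2 * gc * ((Mk : ℂ) - ((i : ℕ) : ℂ))
        else if (i : ℕ) < (j : ℕ) then 4 * gc * Pstar ((j : ℕ) - (i : ℕ))
        else 0).mulVec (fun i : Fin Mk => χ ((i : ℕ) + 1)) = 0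
      ∧ (fun i : Fin Mk => χ ((i : ℕ) + 1)) ≠ 0 := by
  obtain rfl : S = fun g => powerSum C (clusterCoord η k (e g)) := funext fun g => funext (hS g)
  have hgood : ∀ᶠ g in 𝓝[≠] gc, g ≠ gc ∧ |g - gc| < ε :=
    eventually_mem_nhdsWithin.and
      (eventually_nhdsWithin_of_eventually_nhds (eventually_abs_sub_lt gc hε))
  have hcoord : ∀ α ∈ C, Tendsto (fun g => clusterCoord η k (e g) α) (𝓝[≠] gc) (𝓝 0) :=
    fun α hα => by
      simpa [clusterCoord] using (tendsto_const_nhds (x := 2 * (η k : ℂ))).sub (hlimC α hα)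
  have hpole := tendsto_clusterPole (η := η) (k := k) (s := univ.erase k) fun β hβ =>
    hlimnC β (mem_compl.mp hβ)
  have hpole_ne := clusterPole_ne_zero hη fun β hβ => hstar_ne β hβ k
  refine ⟨mulVec_eq_zero_of_row_eq_zero fun i hi => ?_, fun h => ?_⟩
  · refine row_eq_zero_of_moment_identity (δ := d k)
      ((Complex.continuous_ofReal.tendsto gc).mono_left nhdsWithin_le_nhds)
      (by exact_mod_cast hcluster) (fun g => by simp [powerSum, hMk])
      (fun n => by simpa [hMk] using tendsto_powerSum_of_tendsto_zero hcoord n) hχ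
      (fun n => by simpa [hPstar, sum_disjSum, clusterWeight, clusterPole, clusterCoord] using
        tendsto_sum_div_pow (w := clusterWeight d) hpole hpole_ne (n + 1))
      ?_ hi (hgood.mono fun g hg => richardson_moment_identity (k := k) (C := C) hη
        (hinj g hg.1 hg.2) (hed g hg.1 hg.2) (hrich g hg.1 hg.2) i (Mk - i))
    rw [show i + 1 + (Mk - i) = Mk + 1 by omega]
    exact tendsto_sum_pow_succ_mul_sum_div_div_of_isBigO hCne hcoord hpole hpole_ne hbigO
  · simpa [hχ1] using congrFun h ⟨0, hMk1⟩

/-- At a critical point `g_c` with cluster condition `Mk = 1 - 2·d k`, the nonzero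
vector `(χ 1, …, χ Mk)` of limit ratios `χ p = lim_{g→g_c} S p (g)/S 1 (g)` satisfies
the homogeneous linear system `A·χ = 0`, where `A` is the `Mk × Mk` matrix with
`A p p = 1 + 4g_c·P₀*`, `A p (p-1) = -2g_c·(Mk+1-p)`, `A p q = 4g_c·P*_{q-p}` for
`q > p` and `A p q = 0` for `q < p - 1`. -/
theorem stmt_11
    (M L : ℕ) (hM : 1 ≤ M) (hL : 1 ≤ L)
    (η : Fin L → ℝ) (hη : Function.Injective η) (d : Fin L → ℝ)
    (k : Fin L) (C : Finset (Fin M)) (Mk : ℕ) (hMk : C.card = Mk) (hMk1 : 1 ≤ Mk)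
    (hCne : C.Nonempty)
    (gc : ℝ) (hgc : gc ≠ 0) (ε : ℝ) (hε : 0 < ε)
    (e : ℝ → Fin M → ℂ)
    (hinj : ∀ g, g ≠ gc → |g - gc| < ε → Function.Injective (e g))
    (hed : ∀ g, g ≠ gc → |g - gc| < ε → ∀ α j, e g α ≠ 2 * (η j : ℂ))
    (hrich : ∀ g, g ≠ gc → |g - gc| < ε → ∀ α,
      (1 : ℂ) - 4 * g * ∑ j, (d j : ℂ) / (2 * (η j : ℂ) - e g α)
        + 4 * g * ∑ β ∈ univ.erase α, 1 / (e g α - e g β) = 0)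
    (hlimC : ∀ α ∈ C, Tendsto (fun g => e g α) (𝓝[≠] gc) (𝓝 (2 * (η k : ℂ))))
    (estar : Fin M → ℂ)
    (hlimnC : ∀ β, β ∉ C → Tendsto (fun g => e g β) (𝓝[≠] gc) (𝓝 (estar β)))
    (hstar_inj : ∀ β γ, β ∉ C → γ ∉ C → β ≠ γ → estar β ≠ estar γ)
    (hstar_ne : ∀ β, β ∉ C → ∀ j, estar β ≠ 2 * (η j : ℂ))
    (S : ℝ → ℕ → ℂ)
    (hS : ∀ g q, S g q = ∑ α ∈ C, (2 * (η k : ℂ) - e g α) ^ q)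
    (Pstar : ℕ → ℂ)
    (hPstar : ∀ n, Pstar n =
        ∑ j ∈ univ.erase k, (d j : ℂ) / (2 * (η k : ℂ) - 2 * (η j : ℂ)) ^ (n + 1)
        + ∑ β ∈ Cᶜ, 1 / (2 * (η k : ℂ) - estar β) ^ (n + 1))
    (hcluster : (Mk : ℝ) = 1 - 2 * d k)
    (hS1ne : ∀ g, g ≠ gc → |g - gc| < ε → S g 1 ≠ 0)
    (χ : ℕ → ℂ)
    (hχ : ∀ p, 1 ≤ p → p ≤ Mk →
      Tendsto (fun g => S g p / S g 1) (𝓝[≠] gc) (𝓝 (χ p)))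
    (hχ1 : χ 1 = 1)
    (hbigO : (fun g => (C.sup' hCne fun γ => ‖2 * (η k : ℂ) - e g γ‖) ^ Mk)
        =O[𝓝[≠] gc] fun g => S g 1) :
    (Matrix.of fun i j : Fin Mk =>
        if (j : ℕ) = (i : ℕ) then (1 : ℂ) + 4 * gc * Pstar 0
        else if (j : ℕ) + 1 = (i : ℕ) then -2 * gc * ((Mk : ℂ) - ((i : ℕ) : ℂ))
        else if (i : ℕ) < (j : ℕ) then 4 * gc * Pstar ((j : ℕ) - (i : ℕ))
        else 0).mulVec (fun i : Fin Mk => χ ((i : ℕ) + 1)) = 0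
      ∧ (fun i : Fin Mk => χ ((i : ℕ) + 1)) ≠ 0 :=
  stmt_11_general M L η hη d k C Mk hMk hMk1 hCne gc ε hε e hinj hed hrich hlimC estar hlimnC
    hstar_ne S hS Pstar hPstar hcluster χ hχ hχ1 hbigO
end
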